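/- arXiv:1001.0232 — 7 statements merged into one kernel-verified Lean document; each statement's English description precedes it below -/
import Mathlib

section
/- Let s ∈ ℝ and f ∈ 𝒜. Define g_s(x) := (f(x) − f(s))/(x − s) for x ≠ s and g_s(s) := f′(s). Then g_s is smooth on ℝ and belongs to 𝒜. -/
open Real Set

noncomputable section

def Sβ (β : ℝ) : Set (ℝ → ℂ) :=
  {f | ContDiff ℝ (⊤ : ℕ∞) f ∧ ∀ n : ℕ, ∃ c : ℝ, 0 < c ∧ ∀ x : ℝ,
    ‖iteratedDeriv n f x‖ ≤ c * (1 + x ^ 2) ^ ((β - n) / 2)}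

def Acal : Set (ℝ → ℂ) := ⋃ β ∈ Iio (0 : ℝ), Sβ β


private lemma gfun_eq (s : ℝ) (f : ℝ → ℂ) :
    (fun x : ℝ => if x = s then deriv f s else (f x - f s) / (x - s : ℂ)) = dslope f s := by
  funext x
  rcases eq_or_ne x s with rfl | hx
  · simp [dslope_same]
  · rw [if_neg hx, dslope_of_ne _ hx]
    simp [slope, Complex.real_smul, div_eq_mul_inv, mul_comm]

private lemma dslope_contDiff (s : ℝ) (f : ℝ → ℂ) (hf : ContDiff ℝ (⊤ : ℕ∞) f) :
    ContDiff ℝ (⊤ : ℕ∞) (dslope f s) := by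
  have hdf : ContDiff ℝ (⊤ : ℕ∞) (deriv f) := (contDiff_infty_iff_deriv.1 hf).2
  have hdiff : Differentiable ℝ f := (contDiff_infty_iff_deriv.1 hf).1
  have key : ∀ x, dslope f s x = ∫ t in (0:ℝ)..1, deriv f (s + t * (x - s)) := by
    intro x
    rcases eq_or_ne x s with rfl | hx
    · simp [dslope_same]
    · rw [dslope_of_ne _ hx, slope_def_module]
      have hI : ∫ t in (0:ℝ)..1, (x - s) • deriv f (s + t * (x - s)) = f x - f s := by
        have := intervalIntegral.integral_eq_sub_of_hasDerivAt
          (f := fun t : ℝ => f (s + t * (x - s)))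
          (f' := fun t : ℝ => (x - s) • deriv f (s + t * (x - s))) (a := 0) (b := 1)
          (fun t _ => by
            have h1 : HasDerivAt (fun t : ℝ => s + t * (x - s)) (x - s) t := by
              simpa using ((hasDerivAt_id t).mul_const (x - s)).const_add s
            exact (hdiff (s + t * (x - s))).hasDerivAt.scomp t h1)
          (by
            apply Continuous.intervalIntegrable
            exact (hdf.continuous.comp (continuous_const.add (continuous_id.mul continuous_const))).const_smul (x - s))
        simpa using this
      rw [intervalIntegral.integral_smul] at hI
      rw [← hI, smul_smul, inv_mul_cancel₀ (sub_ne_zero.mpr hx), one_smul]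
  let χ : ContDiffBump (0 : ℝ) := ⟨1, 2, one_pos, one_lt_two⟩
  let ind : ℝ → ℝ := Set.indicator (Icc (0:ℝ) 1) (fun _ => (1:ℝ))
  let g : ℝ → ℝ → ℂ := fun p y => (χ y) • deriv f (s + (-y) * (p - s))
  have hconv := MeasureTheory.contDiffOn_convolution_right_with_param_comp (n := (⊤ : ℕ∞))
    (ContinuousLinearMap.lsmul ℝ ℝ : ℝ →L[ℝ] ℂ →L[ℝ] ℂ) (s := univ)
    (v := fun _ : ℝ => (0:ℝ)) contDiffOn_const (f := ind) (g := g) (k := Metric.closedBall 0 2)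
    (μ := MeasureTheory.volume) isOpen_univ (isCompact_closedBall 0 2)
    (fun p y _ hy => by
      have : χ y = 0 := χ.zero_of_le_dist (by
        rw [Metric.mem_closedBall, not_le] at hy; exact hy.le)
      simp [g, this])
    ((continuous_const.integrableOn_Icc).integrable_indicator measurableSet_Icc).locallyIntegrable
    (by
      apply ContDiff.contDiffOn
      exact (χ.contDiff.comp contDiff_snd).smul (hdf.comp (by fun_prop)))
  rw [contDiffOn_univ] at hconv
  convert hconv using 1
  funext x
  rw [key x, MeasureTheory.convolution_def, intervalIntegral.integral_of_le zero_le_one,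
    ← MeasureTheory.integral_Icc_eq_integral_Ioc, ← MeasureTheory.integral_indicator measurableSet_Icc]
  congr 1
  funext t
  by_cases ht : t ∈ Icc (0:ℝ) 1
  · have h1 : χ (-t) = 1 := χ.one_of_mem_closedBall (by
      simp only [Metric.mem_closedBall, dist_zero_right, norm_neg, Real.norm_eq_abs]
      rw [abs_le]; exact ⟨by linarith [ht.1], ht.2⟩)
    simp [ind, g, ht, h1]
  · simp [ind, g, ht]
private lemma hasDeriv_iter (g : ℝ → ℂ) (hg : ContDiff ℝ (⊤ : ℕ∞) g) (k : ℕ) (x : ℝ) :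
    HasDerivAt (iteratedDeriv k g) (iteratedDeriv (k + 1) g x) x := by
  rw [iteratedDeriv_succ]
  exact ((hg.differentiable_iteratedDeriv k (by exact_mod_cast ENat.coe_lt_top k)) x).hasDerivAt

private lemma rec_formula (s : ℝ) (f : ℝ → ℂ) (hg : ContDiff ℝ (⊤ : ℕ∞) (dslope f s)) (n : ℕ) :
    ∀ x : ℝ, iteratedDeriv (n + 1) f x
      = (x - s) • iteratedDeriv (n + 1) (dslope f s) x
        + ((n : ℝ) + 1) • iteratedDeriv n (dslope f s) x := by
  induction n with
  | zero =>
    intro x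
    have hid : ∀ y : ℝ, f y = (y - s) • dslope f s y + f s := fun y => by
      rw [sub_smul_dslope, sub_add_cancel]
    have H : HasDerivAt (fun y : ℝ => (y - s) • dslope f s y + f s)
        ((x - s) • iteratedDeriv 1 (dslope f s) x + (1 : ℝ) • dslope f s x) x := by
      have h1 : HasDerivAt (dslope f s) (iteratedDeriv 1 (dslope f s) x) x := by
        simpa using hasDeriv_iter (dslope f s) hg 0 x
      exact (((hasDerivAt_id x).sub_const s).smul h1).add_const (f s)
    have H' : HasDerivAt f ((x - s) • iteratedDeriv 1 (dslope f s) x + (1 : ℝ) • dslope f s x) x :=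
      H.congr_of_eventuallyEq (Filter.Eventually.of_forall hid)
    rw [iteratedDeriv_one, H'.deriv]
    simp
  | succ n IH =>
    intro x
    have H : HasDerivAt
        (fun y : ℝ => (y - s) • iteratedDeriv (n + 1) (dslope f s) y
          + ((n : ℝ) + 1) • iteratedDeriv n (dslope f s) y)
        (((x - s) • iteratedDeriv (n + 2) (dslope f s) x
            + (1 : ℝ) • iteratedDeriv (n + 1) (dslope f s) x)
          + ((n : ℝ) + 1) • iteratedDeriv (n + 1) (dslope f s) x) x := by
      exact (((hasDerivAt_id x).sub_const s).smul
          (hasDeriv_iter (dslope f s) hg (n + 1) x)).add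
        ((hasDeriv_iter (dslope f s) hg n x).const_smul ((n : ℝ) + 1))
    have H' : HasDerivAt (iteratedDeriv (n + 1) f)
        (((x - s) • iteratedDeriv (n + 2) (dslope f s) x
            + (1 : ℝ) • iteratedDeriv (n + 1) (dslope f s) x)
          + ((n : ℝ) + 1) • iteratedDeriv (n + 1) (dslope f s) x) x :=
      H.congr_of_eventuallyEq (Filter.Eventually.of_forall IH)
    rw [iteratedDeriv_succ (n := n + 1), H'.deriv]
    push_cast
    module
private lemma sqrt_le_far (s x : ℝ) (hfar : 1 + |s| ≤ |x - s|) :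
    (1 + x ^ 2) ^ ((1 : ℝ) / 2) ≤ 2 * |x - s| := by
  have hxa : |x| ≤ |s| + |x - s| := by
    calc |x| = |s + (x - s)| := by ring_nf
    _ ≤ |s| + |x - s| := abs_add_le _ _
  have h2 : 1 + x ^ 2 ≤ (2 * |x - s|) ^ 2 := by
    have hx2 : x ^ 2 ≤ (|s| + |x - s|) ^ 2 := by
      rw [← sq_abs x]; exact pow_le_pow_left₀ (abs_nonneg x) hxa 2
    nlinarith [hx2, abs_nonneg s, abs_nonneg (x - s),
      mul_nonneg (by linarith : (0:ℝ) ≤ |x - s| - |s| - 1)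
        (by positivity : (0:ℝ) ≤ 3 * |x - s| + |s|)]
  calc (1 + x ^ 2) ^ ((1 : ℝ) / 2)
      ≤ ((2 * |x - s|) ^ 2) ^ ((1 : ℝ) / 2) :=
        Real.rpow_le_rpow (by positivity) h2 (by norm_num)
    _ = 2 * |x - s| := by
        rw [← Real.rpow_natCast (2 * |x - s|) 2, ← Real.rpow_mul (by positivity)]
        norm_num

private lemma global_of_far (s e : ℝ) (he : e ≤ 0) (u : ℝ → ℂ) (hu : Continuous u)
    (D : ℝ) (hD : 0 ≤ D)
    (hfar : ∀ x : ℝ, 1 + |s| ≤ |x - s| → ‖u x‖ ≤ D * (1 + x ^ 2) ^ (e / 2)) :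
    ∃ C : ℝ, 0 < C ∧ ∀ x : ℝ, ‖u x‖ ≤ C * (1 + x ^ 2) ^ (e / 2) := by
  obtain ⟨M, hM⟩ := (isCompact_Icc (a := s - (1 + |s|)) (b := s + (1 + |s|))
    ).exists_bound_of_continuousOn hu.continuousOn
  have hM0 : 0 ≤ M := le_trans (norm_nonneg (u s)) <| hM s <| by
    constructor <;> nlinarith [abs_nonneg s]
  set K : ℝ := 1 + (|s| + (1 + |s|)) ^ 2 with hK
  have hKpos : (0 : ℝ) < K := by positivity
  set m : ℝ := K ^ (e / 2) with hm
  have hmpos : 0 < m := Real.rpow_pos_of_pos hKpos _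
  refine ⟨max D (M / m) + 1, by positivity, fun x => ?_⟩
  have hCD : D ≤ max D (M / m) + 1 := le_add_of_le_of_nonneg (le_max_left _ _) one_pos.le
  have hCM : M / m ≤ max D (M / m) + 1 := le_add_of_le_of_nonneg (le_max_right _ _) one_pos.le
  have hrpos : (0 : ℝ) < (1 + x ^ 2) ^ (e / 2) := Real.rpow_pos_of_pos (by positivity) _
  rcases le_or_gt (1 + |s|) |x - s| with h | h
  · exact (hfar x h).trans (mul_le_mul_of_nonneg_right hCD hrpos.le)
  · have hx1 : |x| ≤ |s| + (1 + |s|) := by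
      have : |x| ≤ |s| + |x - s| := by
        calc |x| = |s + (x - s)| := by ring_nf
        _ ≤ |s| + |x - s| := abs_add_le _ _
      linarith
    have hxmem : x ∈ Icc (s - (1 + |s|)) (s + (1 + |s|)) := by
      rcases abs_sub_le_iff.mp h.le with ⟨h1, h2⟩
      constructor <;> linarith
    have hyK : 1 + x ^ 2 ≤ K := by nlinarith [sq_abs x, abs_nonneg x]
    have hmy : m ≤ (1 + x ^ 2) ^ (e / 2) :=
      Real.rpow_le_rpow_of_nonpos (by positivity) hyK (by linarith)
    calc ‖u x‖ ≤ M := hM x hxmem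
    _ ≤ (max D (M / m) + 1) * m := by
        rw [← div_le_iff₀ hmpos] at *
        exact le_trans (by simp) hCM
    _ ≤ (max D (M / m) + 1) * (1 + x ^ 2) ^ (e / 2) := by
        apply mul_le_mul_of_nonneg_left hmy (by positivity)

private lemma bound_main (s β : ℝ) (hβ : β < 0) (f : ℝ → ℂ)
    (hg : ContDiff ℝ (⊤ : ℕ∞) (dslope f s))
    (hb : ∀ n : ℕ, ∃ c : ℝ, 0 < c ∧ ∀ x : ℝ,
      ‖iteratedDeriv n f x‖ ≤ c * (1 + x ^ 2) ^ ((β - n) / 2)) :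
    ∀ n : ℕ, ∃ C : ℝ, 0 < C ∧ ∀ x : ℝ, ‖iteratedDeriv n (dslope f s) x‖
      ≤ C * (1 + x ^ 2) ^ ((max β (-1) - n) / 2) := by
  set g := dslope f s with hgdef
  set β' := max β (-1) with hβ'def
  have hββ' : β ≤ β' := le_max_left _ _
  have h1β' : -1 ≤ β' := le_max_right _ _
  have hβ'0 : β' < 0 := max_lt hβ (by norm_num)
  have hcont : ∀ k : ℕ, Continuous (iteratedDeriv k g) := fun k =>
    (hg.differentiable_iteratedDeriv k (by exact_mod_cast ENat.coe_lt_top k)).continuous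
  intro n
  induction n with
  | zero =>
    obtain ⟨c, hc, hcb⟩ := hb 0
    refine global_of_far s (β' - (0 : ℕ)) (by simp; linarith) _ (by simpa using hcont 0)
      (4 * c) (by positivity) ?_
    intro x hx
    have hxs : (0 : ℝ) < |x - s| := lt_of_lt_of_le (by positivity) hx
    have hy0 : (0 : ℝ) < 1 + x ^ 2 := by positivity
    have hy1 : (1 : ℝ) ≤ 1 + x ^ 2 := by nlinarith
    have hfs : ‖f s‖ ≤ c := by
      refine (hcb s).trans ?_
      have : (1 + s ^ 2 : ℝ) ^ ((β - (0:ℕ)) / 2) ≤ 1 :=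
        Real.rpow_le_one_of_one_le_of_nonpos (by nlinarith) (by push_cast; linarith)
      nlinarith
    have hfx : ‖f x‖ ≤ c * (1 + x ^ 2) ^ ((β' + 1) / 2) := by
      refine (hcb x).trans (mul_le_mul_of_nonneg_left ?_ hc.le)
      exact Real.rpow_le_rpow_of_exponent_le hy1 (by push_cast; linarith)
    have hone : (1 : ℝ) ≤ (1 + x ^ 2) ^ ((β' + 1) / 2) := by
      have := Real.rpow_le_rpow_of_exponent_le hy1 (show (0:ℝ) ≤ (β' + 1) / 2 by linarith)
      rwa [Real.rpow_zero] at this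
    have hsplit : ((1 + x ^ 2 : ℝ)) ^ ((β' + 1) / 2)
        = (1 + x ^ 2) ^ (β' / 2) * (1 + x ^ 2) ^ ((1:ℝ) / 2) := by
      rw [← Real.rpow_add hy0]; ring_nf
    have hkey : |x - s| * ‖g x‖ = ‖f x - f s‖ := by
      rw [← sub_smul_dslope f s x, norm_smul, Real.norm_eq_abs]
    have hrpos : (0 : ℝ) ≤ (1 + x ^ 2) ^ (β' / 2) := (Real.rpow_pos_of_pos hy0 _).le
    have main : |x - s| * ‖iteratedDeriv 0 g x‖
        ≤ |x - s| * (4 * c * (1 + x ^ 2) ^ ((β' - (0:ℕ)) / 2)) := by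
      rw [iteratedDeriv_zero, hkey]
      calc ‖f x - f s‖ ≤ ‖f x‖ + ‖f s‖ := norm_sub_le _ _
        _ ≤ c * (1 + x ^ 2) ^ ((β' + 1) / 2) + c * (1 + x ^ 2) ^ ((β' + 1) / 2) := by
            refine add_le_add hfx (hfs.trans ?_)
            nlinarith
        _ = 2 * c * ((1 + x ^ 2) ^ (β' / 2) * (1 + x ^ 2) ^ ((1:ℝ) / 2)) := by
            rw [← hsplit]; ring
        _ ≤ 2 * c * ((1 + x ^ 2) ^ (β' / 2) * (2 * |x - s|)) := by
            refine mul_le_mul_of_nonneg_left (mul_le_mul_of_nonneg_left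
              (sqrt_le_far s x hx) hrpos) (by positivity)
        _ = |x - s| * (4 * c * (1 + x ^ 2) ^ ((β' - (0:ℕ)) / 2)) := by
            push_cast; ring_nf
    exact (mul_le_mul_iff_right₀ hxs).mp main
  | succ n IH =>
    obtain ⟨C, hC, hCb⟩ := IH
    obtain ⟨c, hc, hcb⟩ := hb (n + 1)
    refine global_of_far s (β' - (n + 1 : ℕ)) (by push_cast; linarith) _
      (by simpa using hcont (n + 1)) (2 * c + 2 * ((n : ℝ) + 1) * C) (by positivity) ?_
    intro x hx
    have hxs : (0 : ℝ) < |x - s| := lt_of_lt_of_le (by positivity) hx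
    have hy0 : (0 : ℝ) < 1 + x ^ 2 := by positivity
    have hy1 : (1 : ℝ) ≤ 1 + x ^ 2 := by nlinarith
    have hrec := rec_formula s f hg n x
    have e1 : (x - s) • iteratedDeriv (n + 1) g x
        = iteratedDeriv (n + 1) f x - ((n : ℝ) + 1) • iteratedDeriv n g x := by
      rw [hrec]; abel
    have hsplit : ((1 + x ^ 2 : ℝ)) ^ ((β' - n) / 2)
        = (1 + x ^ 2) ^ ((β' - (n + 1 : ℕ)) / 2) * (1 + x ^ 2) ^ ((1:ℝ) / 2) := by
      rw [← Real.rpow_add hy0]; push_cast; ring_nf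
    have hrpos : (0 : ℝ) ≤ (1 + x ^ 2) ^ ((β' - (n + 1 : ℕ)) / 2) :=
      (Real.rpow_pos_of_pos hy0 _).le
    have hfx : ‖iteratedDeriv (n + 1) f x‖ ≤ c * (1 + x ^ 2) ^ ((β' - n) / 2) := by
      refine (hcb x).trans (mul_le_mul_of_nonneg_left ?_ hc.le)
      exact Real.rpow_le_rpow_of_exponent_le hy1 (by push_cast; linarith)
    have main : |x - s| * ‖iteratedDeriv (n + 1) g x‖
        ≤ |x - s| * ((2 * c + 2 * ((n : ℝ) + 1) * C)
            * (1 + x ^ 2) ^ ((β' - (n + 1 : ℕ)) / 2)) := by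
      calc |x - s| * ‖iteratedDeriv (n + 1) g x‖
          = ‖(x - s) • iteratedDeriv (n + 1) g x‖ := by
            rw [norm_smul, Real.norm_eq_abs]
        _ = ‖iteratedDeriv (n + 1) f x - ((n : ℝ) + 1) • iteratedDeriv n g x‖ := by rw [e1]
        _ ≤ ‖iteratedDeriv (n + 1) f x‖ + ((n : ℝ) + 1) * ‖iteratedDeriv n g x‖ := by
            refine (norm_sub_le _ _).trans ?_
            rw [norm_smul, Real.norm_eq_abs, abs_of_nonneg (by positivity)]
        _ ≤ c * (1 + x ^ 2) ^ ((β' - n) / 2)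
            + ((n : ℝ) + 1) * (C * (1 + x ^ 2) ^ ((β' - n) / 2)) := by
            refine add_le_add hfx (mul_le_mul_of_nonneg_left (hCb x) (by positivity))
        _ = (c + ((n : ℝ) + 1) * C) * ((1 + x ^ 2) ^ ((β' - (n + 1 : ℕ)) / 2)
              * (1 + x ^ 2) ^ ((1:ℝ) / 2)) := by rw [← hsplit]; ring
        _ ≤ (c + ((n : ℝ) + 1) * C) * ((1 + x ^ 2) ^ ((β' - (n + 1 : ℕ)) / 2)
              * (2 * |x - s|)) := by
            refine mul_le_mul_of_nonneg_left (mul_le_mul_of_nonneg_left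
              (sqrt_le_far s x hx) hrpos) (by positivity)
        _ = |x - s| * ((2 * c + 2 * ((n : ℝ) + 1) * C)
              * (1 + x ^ 2) ^ ((β' - (n + 1 : ℕ)) / 2)) := by ring
    exact (mul_le_mul_iff_right₀ hxs).mp main

theorem stmt4 (s : ℝ) (f : ℝ → ℂ) (hf : f ∈ Acal) :
    ContDiff ℝ (⊤ : ℕ∞) (fun x : ℝ =>
      if x = s then deriv f s else (f x - f s) / (x - s : ℂ)) ∧
    (fun x : ℝ =>
      if x = s then deriv f s else (f x - f s) / (x - s : ℂ)) ∈ Acal := by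
  simp only [Acal, mem_iUnion, mem_Iio] at hf
  obtain ⟨β, hβ, hfS⟩ := hf
  obtain ⟨hf_smooth, hf_bd⟩ := hfS
  rw [gfun_eq s f]
  have hg := dslope_contDiff s f hf_smooth
  refine ⟨hg, ?_⟩
  simp only [Acal, mem_iUnion, mem_Iio]
  refine ⟨max β (-1), max_lt hβ (by norm_num), hg, ?_⟩
  exact bound_main s β hβ f hg hf_bd
end
end

section
/- Let z ∈ ℂ with z ≠ 0 and f ∈ 𝒜 be such that −z does not lie in the closure of the range of f. Then the function μ(x) := 1/(z + f(x)) − 1/z belongs to 𝒜, and consequently the function x ↦ z + f(x) has a pointwise multiplicative inverse of the form x ↦ 1/z + μ(x) with μ ∈ 𝒜. -/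
open Real Set

noncomputable section

theorem stmt9 (z : ℂ) (hz : z ≠ 0) (f : ℝ → ℂ) (hf : f ∈ Acal)
    (hran : -z ∉ closure (Set.range f)) :
    (fun x : ℝ => (z + f x)⁻¹ - z⁻¹) ∈ Acal ∧
    ∀ x : ℝ, (z + f x) * (z⁻¹ + ((z + f x)⁻¹ - z⁻¹)) = 1 := by
  classical
  obtain ⟨β, hβ, hsm, hbd⟩ : ∃ β : ℝ, β < 0 ∧ ContDiff ℝ (⊤ : ℕ∞) f ∧ ∀ n : ℕ, ∃ c : ℝ, 0 < c ∧
      ∀ x : ℝ, ‖iteratedDeriv n f x‖ ≤ c * (1 + x ^ 2) ^ ((β - n) / 2) := by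
    simp only [Acal, Set.mem_iUnion, Set.mem_Iio, Sβ, Set.mem_setOf_eq] at hf
    obtain ⟨β, hβ, h1, h2⟩ := hf
    exact ⟨β, hβ, h1, h2⟩
  choose cf hcf hfb using hbd
  obtain ⟨δ, hδ, hlow⟩ : ∃ δ : ℝ, 0 < δ ∧ ∀ x, δ ≤ ‖z + f x‖ := by
    obtain ⟨ε, hε, hball⟩ := Metric.isOpen_iff.1 isClosed_closure.isOpen_compl _ hran
    refine ⟨ε, hε, fun x => ?_⟩
    by_contra hlt
    push_neg at hlt
    have hmem : f x ∈ Metric.ball (-z) ε := by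
      rw [Metric.mem_ball, dist_eq_norm]
      have h1 : f x - -z = z + f x := by ring
      rw [h1]
      exact hlt
    exact hball hmem (subset_closure (Set.mem_range_self x))
  have hne : ∀ x : ℝ, z + f x ≠ 0 := by
    intro x h0
    have h1 := hlow x
    rw [h0, norm_zero] at h1
    linarith
  set g : ℝ → ℂ := fun x => (z + f x)⁻¹ with hgdef
  have hgc : ContDiff ℝ (⊤ : ℕ∞) g := (contDiff_const.add hsm).inv hne
  have hb0 : ∀ x : ℝ, (0:ℝ) < 1 + x ^ 2 := fun x => by positivity
  have hb1 : ∀ x : ℝ, (1:ℝ) ≤ 1 + x ^ 2 := fun x => by nlinarith [sq_nonneg x]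
  have hwmul : ∀ (x : ℝ) (s t : ℝ),
      (1+x^2) ^ (s/2) * (1+x^2) ^ (t/2) = (1+x^2) ^ ((s+t)/2) := by
    intro x s t
    rw [← Real.rpow_add (hb0 x), ← add_div]
  have hwmono : ∀ (x : ℝ) {s t : ℝ}, s ≤ t → (1+x^2) ^ (s/2) ≤ (1+x^2) ^ (t/2) := by
    intro x s t hst
    exact Real.rpow_le_rpow_of_exponent_le (hb1 x) (by linarith)
  have hwpos : ∀ (x t : ℝ), 0 < (1+x^2) ^ (t/2) := fun x t => Real.rpow_pos_of_pos (hb0 x) _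
  have leib : ∀ (u v : ℝ → ℂ), ContDiff ℝ (⊤ : ℕ∞) u → ContDiff ℝ (⊤ : ℕ∞) v → ∀ (n : ℕ) (x : ℝ),
      ‖iteratedDeriv n (fun x => u x * v x) x‖ ≤ ∑ i ∈ Finset.range (n+1),
        (n.choose i : ℝ) * ‖iteratedDeriv i u x‖ * ‖iteratedDeriv (n-i) v x‖ := by
    intro u v hu hv n x
    simpa only [norm_iteratedFDeriv_eq_norm_iteratedDeriv] using
      norm_iteratedFDeriv_mul_le hu hv x (by exact_mod_cast le_top)
  set E : ℕ → ℝ := fun n => if n = 0 then 0 else β - n with hEdef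
  have hE0 : E 0 = 0 := by simp [hEdef]
  have hE2 : ∀ l j : ℕ, l ≤ j → E l + E (j - l) ≤ E j := by
    intro l j hlj
    rcases Nat.eq_zero_or_pos l with rfl | hl
    · simp [hEdef]
    rcases Nat.eq_zero_or_pos (j - l) with h0 | h2
    · have hlj' : l = j := by omega
      subst hlj'
      simp only [hEdef, h0, if_pos rfl, add_zero]
      exact le_rfl
    · have hj : j ≠ 0 := by omega
      have hl' : l ≠ 0 := by omega
      have h2' : j - l ≠ 0 := by omega
      simp only [hEdef, if_neg hl', if_neg h2', if_neg hj]
      have hcast : ((j - l : ℕ) : ℝ) = (j : ℝ) - l := by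
        rw [Nat.cast_sub hlj]
      rw [hcast]
      linarith
  have key : ∀ n : ℕ, ∃ c : ℝ, 0 < c ∧ ∀ m ≤ n, ∀ x : ℝ,
      ‖iteratedDeriv m g x‖ ≤ c * (1 + x ^ 2) ^ (E m / 2) := by
    intro n
    induction n with
    | zero =>
      refine ⟨δ⁻¹, by positivity, ?_⟩
      intro m hm x
      have hm0 : m = 0 := Nat.le_zero.mp hm
      subst hm0
      rw [iteratedDeriv_zero, hE0]
      simp only [zero_div, Real.rpow_zero, mul_one]
      have hgx : ‖g x‖ = ‖z + f x‖⁻¹ := by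
        rw [hgdef]; exact norm_inv _
      rw [hgx]
      exact inv_anti₀ hδ (hlow x)
    | succ n IH =>
      obtain ⟨c, hc, hcb⟩ := IH
      have hdg : deriv g = fun x => (-(deriv f x)) * (g x * g x) := by
        funext x
        have hdiff : DifferentiableAt ℝ (fun y => z + f y) x :=
          ((contDiff_const.add hsm).differentiable (by simp)).differentiableAt
        simp only [hgdef]
        have hd1 : HasDerivAt (fun y => z + f y) (deriv f x) x :=
          HasDerivAt.const_add z ((hsm.differentiable (by simp) x).hasDerivAt)
        have hD : HasDerivAt (fun y => (1:ℂ) / (z + f y))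
            ((0 * (z + f x) - 1 * deriv f x) / (z + f x) ^ 2) x :=
          (hasDerivAt_const x (1:ℂ)).div hd1 (hne x)
        have hfun : (fun y : ℝ => (z + f y)⁻¹) = fun y : ℝ => (1:ℂ) / (z + f y) := by
          funext y
          rw [one_div]
        rw [hfun, hD.deriv]
        field_simp
        ring
      have hdf : ContDiff ℝ (⊤ : ℕ∞) (deriv f) :=
        (contDiff_succ_iff_deriv.mp (hsm.of_le (by simp))).2.2
      have hnegdf : ContDiff ℝ (⊤ : ℕ∞) fun x => -(deriv f x) := hdf.neg
      have hgg : ContDiff ℝ (⊤ : ℕ∞) fun x => g x * g x := hgc.mul hgc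
      have hprod : ∀ j ≤ n, ∀ x, ‖iteratedDeriv j (fun x => g x * g x) x‖ ≤
          (2:ℝ)^j * c^2 * (1+x^2) ^ (E j / 2) := by
        intro j hj x
        have hsum : ∀ l ∈ Finset.range (j+1),
            (j.choose l : ℝ) * ‖iteratedDeriv l g x‖ * ‖iteratedDeriv (j-l) g x‖ ≤
            (j.choose l : ℝ) * (c^2 * (1+x^2) ^ (E j / 2)) := by
          intro l hl
          have hl' : l ≤ j := Nat.lt_succ_iff.mp (Finset.mem_range.mp hl)
          have h1 := hcb l (hl'.trans hj) x
          have h2 := hcb (j-l) ((Nat.sub_le j l).trans hj) x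
          have hkey : ‖iteratedDeriv l g x‖ * ‖iteratedDeriv (j-l) g x‖ ≤
              c^2 * (1+x^2) ^ (E j / 2) := by
            calc ‖iteratedDeriv l g x‖ * ‖iteratedDeriv (j-l) g x‖
                ≤ (c * (1+x^2)^(E l/2)) * (c * (1+x^2)^(E (j-l)/2)) :=
                  mul_le_mul h1 h2 (norm_nonneg _) (by positivity)
              _ = c^2 * ((1+x^2)^(E l/2) * (1+x^2)^(E (j-l)/2)) := by ring
              _ = c^2 * (1+x^2)^((E l + E (j-l))/2) := by rw [hwmul]
              _ ≤ c^2 * (1+x^2)^(E j/2) :=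
                  mul_le_mul_of_nonneg_left (hwmono x (hE2 l j hl')) (by positivity)
          calc (j.choose l : ℝ) * ‖iteratedDeriv l g x‖ * ‖iteratedDeriv (j-l) g x‖
              = (j.choose l : ℝ) * (‖iteratedDeriv l g x‖ * ‖iteratedDeriv (j-l) g x‖) := by
                ring
            _ ≤ (j.choose l : ℝ) * (c^2 * (1+x^2) ^ (E j / 2)) :=
                mul_le_mul_of_nonneg_left hkey (by positivity)
        calc ‖iteratedDeriv j (fun x => g x * g x) x‖
            ≤ ∑ l ∈ Finset.range (j+1), (j.choose l : ℝ) * ‖iteratedDeriv l g x‖ *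
              ‖iteratedDeriv (j-l) g x‖ := leib g g hgc hgc j x
          _ ≤ ∑ l ∈ Finset.range (j+1), (j.choose l : ℝ) * (c^2 * (1+x^2) ^ (E j / 2)) :=
              Finset.sum_le_sum hsum
          _ = (∑ l ∈ Finset.range (j+1), (j.choose l : ℕ) : ℕ) * (c^2 * (1+x^2) ^ (E j / 2)) := by
              rw [← Finset.sum_mul]
              push_cast
              ring
          _ = (2:ℝ)^j * c^2 * (1+x^2) ^ (E j / 2) := by
              rw [Nat.sum_range_choose]
              push_cast
              ring
      set K : ℝ := ∑ i ∈ Finset.range (n+1),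
        (n.choose i : ℝ) * cf (i+1) * ((2:ℝ)^(n-i) * c^2) with hKdef
      have hK0 : 0 ≤ K := by
        apply Finset.sum_nonneg
        intro i _
        have := (hcf (i+1)).le
        positivity
      have hnew : ∀ x, ‖iteratedDeriv (n+1) g x‖ ≤ K * (1+x^2) ^ (E (n+1) / 2) := by
        intro x
        rw [iteratedDeriv_succ', hdg]
        have hEsucc : E (n+1) = β - ((n:ℝ)+1) := by
          simp only [hEdef, if_neg (Nat.succ_ne_zero n)]
          push_cast
          ring
        have hterm : ∀ i ∈ Finset.range (n+1),
            (n.choose i : ℝ) * ‖iteratedDeriv i (fun x => -(deriv f x)) x‖ *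
              ‖iteratedDeriv (n-i) (fun x => g x * g x) x‖ ≤
            (n.choose i : ℝ) * cf (i+1) * ((2:ℝ)^(n-i) * c^2) * (1+x^2) ^ (E (n+1) / 2) := by
          intro i hi
          have hi' : i ≤ n := Nat.lt_succ_iff.mp (Finset.mem_range.mp hi)
          have hf1 : ‖iteratedDeriv i (fun x => -(deriv f x)) x‖ =
              ‖iteratedDeriv (i+1) f x‖ := by
            rw [iteratedDeriv_fun_neg, norm_neg, ← iteratedDeriv_succ']
          have hbf := hfb (i+1) x
          have hbg := hprod (n-i) (Nat.sub_le n i) x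
          have hexp : (β - ((i:ℝ)+1)) + E (n-i) ≤ E (n+1) := by
            rw [hEsucc]
            by_cases h0 : n - i = 0
            · have hin : i = n := by omega
              subst hin
              simp only [h0, hE0]
              push_cast
              linarith
            · simp only [hEdef, if_neg h0]
              have hcast : ((n - i : ℕ) : ℝ) = (n : ℝ) - i := by
                rw [Nat.cast_sub hi']
              rw [hcast]
              linarith
          calc (n.choose i : ℝ) * ‖iteratedDeriv i (fun x => -(deriv f x)) x‖ *
                ‖iteratedDeriv (n-i) (fun x => g x * g x) x‖
              ≤ (n.choose i : ℝ) * (cf (i+1) * (1+x^2)^((β - ((i:ℝ)+1))/2)) *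
                ((2:ℝ)^(n-i) * c^2 * (1+x^2)^(E (n-i)/2)) := by
                apply mul_le_mul _ hbg (norm_nonneg _)
                  (by have := (hcf (i+1)).le; positivity)
                apply mul_le_mul_of_nonneg_left _ (by positivity)
                rw [hf1]
                convert hbf using 3
                · rfl
                push_cast
                ring
            _ = (n.choose i : ℝ) * cf (i+1) * ((2:ℝ)^(n-i) * c^2) *
                ((1+x^2)^((β - ((i:ℝ)+1))/2) * (1+x^2)^(E (n-i)/2)) := by ring
            _ = (n.choose i : ℝ) * cf (i+1) * ((2:ℝ)^(n-i) * c^2) *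
                (1+x^2)^(((β - ((i:ℝ)+1)) + E (n-i))/2) := by rw [hwmul]
            _ ≤ (n.choose i : ℝ) * cf (i+1) * ((2:ℝ)^(n-i) * c^2) *
                (1+x^2) ^ (E (n+1) / 2) := by
                apply mul_le_mul_of_nonneg_left (hwmono x hexp)
                have := (hcf (i+1)).le
                positivity
        calc ‖iteratedDeriv n (fun x => -(deriv f x) * (g x * g x)) x‖
            ≤ ∑ i ∈ Finset.range (n+1), (n.choose i : ℝ) *
              ‖iteratedDeriv i (fun x => -(deriv f x)) x‖ *
              ‖iteratedDeriv (n-i) (fun x => g x * g x) x‖ := leib _ _ hnegdf hgg n x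
          _ ≤ ∑ i ∈ Finset.range (n+1), (n.choose i : ℝ) * cf (i+1) * ((2:ℝ)^(n-i) * c^2) *
              (1+x^2) ^ (E (n+1) / 2) := Finset.sum_le_sum hterm
          _ = K * (1+x^2) ^ (E (n+1) / 2) := by rw [hKdef, Finset.sum_mul]
      refine ⟨c + K + 1, by linarith, ?_⟩
      intro m hm x
      by_cases hmn : m = n + 1
      · subst hmn
        calc ‖iteratedDeriv (n+1) g x‖ ≤ K * (1+x^2) ^ (E (n+1) / 2) := hnew x
          _ ≤ (c + K + 1) * (1+x^2) ^ (E (n+1) / 2) := by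
              apply mul_le_mul_of_nonneg_right (by linarith) (hwpos x _).le
      · have hm' : m ≤ n := by omega
        calc ‖iteratedDeriv m g x‖ ≤ c * (1+x^2) ^ (E m / 2) := hcb m hm' x
          _ ≤ (c + K + 1) * (1+x^2) ^ (E m / 2) := by
              apply mul_le_mul_of_nonneg_right (by linarith) (hwpos x _).le
  constructor
  · -- membership in Acal
    set u : ℝ → ℂ := fun x => (-z⁻¹) * f x with hudef
    have huc : ContDiff ℝ (⊤ : ℕ∞) u := contDiff_const.mul hsm
    have hub : ∀ (j : ℕ) (x : ℝ), ‖iteratedDeriv j u x‖ ≤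
        ‖z‖⁻¹ * cf j * (1+x^2)^((β - (j:ℝ))/2) := by
      intro j x
      have husmul : u = (-z⁻¹) • f := by
        funext y
        simp [hudef, smul_eq_mul]
      have hid : iteratedDeriv j u x = (-z⁻¹) • iteratedDeriv j f x := by
        rw [husmul, ← iteratedDerivWithin_univ, ← iteratedDerivWithin_univ,
          iteratedDerivWithin_const_smul (Set.mem_univ x) uniqueDiffOn_univ _
            ((hsm.of_le (by exact_mod_cast le_top)).contDiffOn.contDiffWithinAt (Set.mem_univ x))]
      rw [hid, norm_smul, norm_neg, norm_inv]
      calc ‖z‖⁻¹ * ‖iteratedDeriv j f x‖ ≤ ‖z‖⁻¹ * (cf j * (1+x^2)^((β - (j:ℝ))/2)) := by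
            apply mul_le_mul_of_nonneg_left (hfb j x) (by positivity)
        _ = ‖z‖⁻¹ * cf j * (1+x^2)^((β - (j:ℝ))/2) := by ring
    have hmu : (fun x : ℝ => (z + f x)⁻¹ - z⁻¹) = fun x => g x * u x := by
      funext x
      simp only [hgdef, hudef]
      have h1 : z - (z + f x) = -f x := by ring
      rw [inv_sub_inv (hne x) hz, h1, div_eq_mul_inv, mul_inv]
      ring
    have hmem : (fun x : ℝ => (z + f x)⁻¹ - z⁻¹) ∈ Sβ β := by
      constructor
      · exact hgc.sub contDiff_const
      · intro n
        obtain ⟨c, hc, hcb⟩ := key n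
        refine ⟨(∑ i ∈ Finset.range (n+1), (n.choose i : ℝ) * c * (‖z‖⁻¹ * cf (n-i))) + 1,
          ?_, ?_⟩
        · have hs : 0 ≤ ∑ i ∈ Finset.range (n+1),
              (n.choose i : ℝ) * c * (‖z‖⁻¹ * cf (n-i)) := by
            apply Finset.sum_nonneg
            intro i _
            have := (hcf (n-i)).le
            positivity
          linarith
        · intro x
          rw [hmu]
          have hterm : ∀ i ∈ Finset.range (n+1),
              (n.choose i : ℝ) * ‖iteratedDeriv i g x‖ * ‖iteratedDeriv (n-i) u x‖ ≤
              (n.choose i : ℝ) * c * (‖z‖⁻¹ * cf (n-i)) * (1+x^2) ^ ((β - (n:ℝ))/2) := by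
            intro i hi
            have hi' : i ≤ n := Nat.lt_succ_iff.mp (Finset.mem_range.mp hi)
            have h1 := hcb i hi' x
            have h2 := hub (n-i) x
            have hexp : E i + (β - ((n-i : ℕ):ℝ)) ≤ β - (n:ℝ) := by
              have hcast : ((n - i : ℕ) : ℝ) = (n : ℝ) - i := by
                rw [Nat.cast_sub hi']
              rw [hcast]
              by_cases h0 : i = 0
              · subst h0
                rw [hE0]
                push_cast
                linarith
              · simp only [hEdef, if_neg h0]
                linarith
            calc (n.choose i : ℝ) * ‖iteratedDeriv i g x‖ * ‖iteratedDeriv (n-i) u x‖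
                ≤ (n.choose i : ℝ) * (c * (1+x^2)^(E i/2)) *
                  (‖z‖⁻¹ * cf (n-i) * (1+x^2)^((β - ((n-i : ℕ):ℝ))/2)) := by
                  apply mul_le_mul _ h2 (norm_nonneg _) (by positivity)
                  exact mul_le_mul_of_nonneg_left h1 (by positivity)
              _ = (n.choose i : ℝ) * c * (‖z‖⁻¹ * cf (n-i)) *
                  ((1+x^2)^(E i/2) * (1+x^2)^((β - ((n-i : ℕ):ℝ))/2)) := by ring
              _ = (n.choose i : ℝ) * c * (‖z‖⁻¹ * cf (n-i)) *
                  (1+x^2)^((E i + (β - ((n-i : ℕ):ℝ)))/2) := by rw [hwmul]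
              _ ≤ (n.choose i : ℝ) * c * (‖z‖⁻¹ * cf (n-i)) * (1+x^2)^((β - (n:ℝ))/2) := by
                  apply mul_le_mul_of_nonneg_left (hwmono x hexp)
                  have := (hcf (n-i)).le
                  positivity
          calc ‖iteratedDeriv n (fun x => g x * u x) x‖
              ≤ ∑ i ∈ Finset.range (n+1), (n.choose i : ℝ) * ‖iteratedDeriv i g x‖ *
                ‖iteratedDeriv (n-i) u x‖ := leib g u hgc huc n x
            _ ≤ ∑ i ∈ Finset.range (n+1), (n.choose i : ℝ) * c * (‖z‖⁻¹ * cf (n-i)) *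
                (1+x^2) ^ ((β - (n:ℝ))/2) := Finset.sum_le_sum hterm
            _ = (∑ i ∈ Finset.range (n+1), (n.choose i : ℝ) * c * (‖z‖⁻¹ * cf (n-i))) *
                (1+x^2) ^ ((β - (n:ℝ))/2) := by rw [Finset.sum_mul]
            _ ≤ ((∑ i ∈ Finset.range (n+1), (n.choose i : ℝ) * c * (‖z‖⁻¹ * cf (n-i))) + 1) *
                (1+x^2) ^ ((β - (n:ℝ))/2) := by
                apply mul_le_mul_of_nonneg_right (by linarith) (hwpos x _).le
    exact Set.mem_iUnion₂.mpr ⟨β, hβ, hmem⟩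
  · intro x
    have h1 : z⁻¹ + ((z + f x)⁻¹ - z⁻¹) = (z + f x)⁻¹ := by ring
    rw [h1]
    exact mul_inv_cancel₀ (hne x)
end
end

section
/- Let φ(x) = z + f(x) with z ∈ ℂ, f ∈ 𝒜, and let λ ∈ ℂ be such that φ(x) ≠ λ for all x ∈ ℝ and λ ≠ z. Then (φ − λ)⁻¹ (pointwise reciprocal) is again of the form z′ + g with z′ = 1/(z−λ) and g ∈ 𝒜. -/
open Real Set Filter Topology ContDiff

noncomputable section

/-- exponent for derivatives of `ψ` -/
def EE (β : ℝ) (n : ℕ) : ℝ := if n = 0 then 0 else (β - n) / 2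

/-- exponent for derivatives of `ψ * ψ` -/
def EE' (n : ℕ) : ℝ := if n = 0 then 0 else -(n : ℝ) / 2

lemma one_le_base (x : ℝ) : (1 : ℝ) ≤ 1 + x ^ 2 := by nlinarith [sq_nonneg x]

lemma base_pos (x : ℝ) : (0 : ℝ) < 1 + x ^ 2 := by nlinarith [sq_nonneg x]

lemma rpow_mono (x : ℝ) {a b : ℝ} (h : a ≤ b) :
    (1 + x ^ 2 : ℝ) ^ a ≤ (1 + x ^ 2) ^ b :=
  Real.rpow_le_rpow_of_exponent_le (one_le_base x) h

lemma EE_sum {β : ℝ} (hβ : β < 0) {i j : ℕ} (hij : i ≤ j) :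
    EE β i + EE β (j - i) ≤ EE' j := by
  have hcast : ((j - i : ℕ) : ℝ) = (j : ℝ) - i := by
    push_cast [Nat.cast_sub hij]; ring
  have hjR : (0:ℝ) ≤ (j:ℝ) := Nat.cast_nonneg j
  have hiR : (0:ℝ) ≤ (i:ℝ) := Nat.cast_nonneg i
  have h1 : ∀ k : ℕ, k ≠ 0 → (1:ℝ) ≤ (k:ℝ) := fun k hk => by
    exact_mod_cast Nat.one_le_iff_ne_zero.mpr hk
  by_cases hi : i = 0
  · subst hi
    simp only [EE, EE', if_pos rfl, if_true, eq_self_iff_true, Nat.sub_zero, zero_add]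
    by_cases hj : j = 0
    · simp [hj]
    · simp only [if_neg hj]
      have := h1 j hj; linarith
  · have hj : j ≠ 0 := by omega
    by_cases hji : j - i = 0
    · have hij2 : i = j := by omega
      subst hij2
      simp only [EE, EE', if_neg hi, if_pos hji, if_neg hi, add_zero]
      have := h1 i hi
      linarith
    · simp only [EE, EE', if_neg hi, if_neg hji, if_neg hj, hcast]
      linarith

/-- Leibniz-type bound for the iterated derivative of a product. -/
lemma leibniz_bound {A B : ℝ → ℂ} (hA : ContDiff ℝ ∞ A) (hB : ContDiff ℝ ∞ B)
    (n : ℕ) {cA cB : ℝ} (hcA : 0 ≤ cA) (hcB : 0 ≤ cB) (a b : ℕ → ℝ) (e : ℝ)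
    (hAb : ∀ i ≤ n, ∀ x : ℝ, ‖iteratedDeriv i A x‖ ≤ cA * (1 + x ^ 2) ^ (a i))
    (hBb : ∀ i ≤ n, ∀ x : ℝ, ‖iteratedDeriv i B x‖ ≤ cB * (1 + x ^ 2) ^ (b i))
    (he : ∀ i ≤ n, a i + b (n - i) ≤ e) :
    ∀ x : ℝ, ‖iteratedDeriv n (fun y => A y * B y) x‖ ≤
      2 ^ n * (cA * cB) * (1 + x ^ 2) ^ e := by
  intro x
  rw [← norm_iteratedFDeriv_eq_norm_iteratedDeriv]
  have hn : (n : WithTop ℕ∞) ≤ ∞ := by exact_mod_cast le_top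
  calc ‖iteratedFDeriv ℝ n (fun y => A y * B y) x‖
      ≤ ∑ i ∈ Finset.range (n + 1),
          (n.choose i : ℝ) * ‖iteratedFDeriv ℝ i A x‖ * ‖iteratedFDeriv ℝ (n - i) B x‖ :=
        norm_iteratedFDeriv_mul_le hA hB x hn
    _ ≤ ∑ i ∈ Finset.range (n + 1), (n.choose i : ℝ) * (cA * cB * (1 + x ^ 2) ^ e) := by
        apply Finset.sum_le_sum
        intro i hi
        rw [Finset.mem_range, Nat.lt_succ_iff] at hi
        rw [mul_assoc]
        apply mul_le_mul_of_nonneg_left _ (by positivity)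
        rw [norm_iteratedFDeriv_eq_norm_iteratedDeriv,
          norm_iteratedFDeriv_eq_norm_iteratedDeriv]
        calc ‖iteratedDeriv i A x‖ * ‖iteratedDeriv (n - i) B x‖
            ≤ (cA * (1 + x ^ 2) ^ (a i)) * (cB * (1 + x ^ 2) ^ (b (n - i))) :=
              mul_le_mul (hAb i hi x) (hBb (n - i) (Nat.sub_le n i) x)
                (norm_nonneg _) (by positivity)
          _ = cA * cB * (1 + x ^ 2) ^ (a i + b (n - i)) := by
              rw [Real.rpow_add (base_pos x)]; ring
          _ ≤ cA * cB * (1 + x ^ 2) ^ e :=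
              mul_le_mul_of_nonneg_left (rpow_mono x (he i hi)) (by positivity)
    _ = _ := by
        rw [← Finset.sum_mul, ← Nat.cast_sum, Nat.sum_range_choose]
        push_cast; ring

theorem stmt10 (z l : ℂ) (f : ℝ → ℂ) (hf : f ∈ Acal)
    (hne : ∀ x : ℝ, z + f x ≠ l) (hzl : l ≠ z) :
    ∃ g ∈ Acal, ∀ x : ℝ, (z + f x - l)⁻¹ = (z - l)⁻¹ + g x := by
  obtain ⟨β, hβ, hfS⟩ : ∃ β < (0:ℝ), f ∈ Sβ β := by
    simpa [Acal, mem_iUnion, Iio] using hf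
  obtain ⟨hfsm, hfb⟩ := hfS
  set w : ℂ := z - l with hw
  have hw0 : w ≠ 0 := by rw [hw]; exact sub_ne_zero.mpr hzl.symm
  clear_value w
  set φ : ℝ → ℂ := fun x => w + f x with hφd
  have hφ0 : ∀ x, φ x ≠ 0 := by
    intro x h
    simp only [hφd] at h
    rw [hw] at h
    apply hne x
    linear_combination h
  have hφsm : ContDiff ℝ (⊤ : ℕ∞) φ := contDiff_const.add hfsm
  set ψ : ℝ → ℂ := fun x => (φ x)⁻¹ with hψd
  have hψsm : ContDiff ℝ (⊤ : ℕ∞) ψ := hφsm.inv hφ0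
  have hpsiI : ContDiff ℝ ∞ ψ := hψsm.of_le (by simp)
  have hfI : ContDiff ℝ ∞ f := hfsm.of_le (by simp)
  -- uniform constants for derivatives of f
  have hfc : ∀ m : ℕ, ∃ c : ℝ, 0 < c ∧ ∀ i ≤ m, ∀ x : ℝ,
      ‖iteratedDeriv i f x‖ ≤ c * (1 + x ^ 2) ^ ((β - i) / 2) := by
    intro m
    induction m with
    | zero =>
      obtain ⟨c, hc, hb⟩ := hfb 0
      exact ⟨c, hc, fun i hi x => by rw [Nat.le_zero.mp hi]; simpa using hb x⟩
    | succ m ih =>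
      obtain ⟨c, hc, hb⟩ := ih
      obtain ⟨c', hc', hb'⟩ := hfb (m + 1)
      refine ⟨max c c', lt_max_of_lt_left hc, fun i hi x => ?_⟩
      rcases Nat.lt_succ_iff_lt_or_eq.mp (Nat.lt_succ_of_le hi) with h | h
      · exact le_trans (hb i (Nat.lt_succ_iff.mp h) x)
          (mul_le_mul_of_nonneg_right (le_max_left _ _) (by positivity))
      · subst h
        exact le_trans (hb' x)
          (mul_le_mul_of_nonneg_right (le_max_right _ _) (by positivity))
  -- lower bound for ‖φ‖
  have hδ : ∃ δ : ℝ, 0 < δ ∧ ∀ x, δ ≤ ‖φ x‖ := by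
    have h1 : Tendsto (fun x : ℝ => (1 + x ^ 2 : ℝ)) (cocompact ℝ) atTop := by
      apply tendsto_atTop_mono (fun x : ℝ => ?_) tendsto_norm_cocompact_atTop
      have : |x| ≤ 1 + x ^ 2 := by nlinarith [sq_nonneg (|x| - 1), sq_abs x]
      simpa [Real.norm_eq_abs] using this
    have h2 := (tendsto_rpow_neg_atTop (show (0:ℝ) < -(β/2) by linarith)).comp h1
    simp only [neg_neg, Function.comp_def] at h2
    obtain ⟨c₀, hc₀, hb₀⟩ := hfb 0
    have hg0 : Tendsto (fun x : ℝ => c₀ * (1 + x ^ 2) ^ (β / 2)) (cocompact ℝ)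
        (𝓝 (c₀ * 0)) := h2.const_mul c₀
    rw [mul_zero] at hg0
    have hf0 : Tendsto f (cocompact ℝ) (𝓝 0) :=
      squeeze_zero_norm (fun x => by
        simpa only [iteratedDeriv_zero, Nat.cast_zero, sub_zero] using hb₀ x) hg0
    have hφt : Tendsto (fun x => ‖φ x‖) (cocompact ℝ) (𝓝 ‖w‖) := by
      have : Tendsto φ (cocompact ℝ) (𝓝 w) := by
        simpa using tendsto_const_nhds.add hf0
      exact this.norm
    have hww : ‖w‖ / 2 < ‖w‖ := half_lt_self (norm_pos_iff.mpr hw0)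
    have hev : ∀ᶠ x in cocompact ℝ, ‖w‖ / 2 < ‖φ x‖ :=
      hφt.eventually (eventually_gt_nhds hww)
    obtain ⟨K, hK, hKsub⟩ := mem_cocompact.mp hev
    have hK' : IsCompact (insert (0:ℝ) K) := hK.insert 0
    obtain ⟨x₀, hx₀, hmin⟩ := hK'.exists_isMinOn ⟨0, mem_insert _ _⟩
      (hφsm.continuous.norm.continuousOn)
    refine ⟨min ‖φ x₀‖ (‖w‖ / 2),
      lt_min (norm_pos_iff.mpr (hφ0 x₀)) (half_pos (norm_pos_iff.mpr hw0)), fun x => ?_⟩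
    by_cases hx : x ∈ insert (0:ℝ) K
    · exact le_trans (min_le_left _ _) (hmin hx)
    · have : x ∈ Kᶜ := fun h => hx (mem_insert_of_mem _ h)
      exact le_trans (min_le_right _ _) (le_of_lt (hKsub this))
  obtain ⟨δ, hδ0, hδle⟩ := hδ
  have hψbd : ∀ x, ‖ψ x‖ ≤ δ⁻¹ := by
    intro x
    rw [hψd, norm_inv]
    exact inv_anti₀ hδ0 (hδle x)
  -- the derivative of ψ
  have hderψ : deriv ψ = fun y => -(deriv f y * (ψ y * ψ y)) := by
    funext y
    have hφdiff : DifferentiableAt ℝ φ y :=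
      (hφsm.differentiable (by simp)).differentiableAt
    have hI := (hasDerivAt_inv (hφ0 y)).scomp y hφdiff.hasDerivAt
    rw [Function.comp_def] at hI
    have hd : deriv ψ y = deriv φ y • -(φ y ^ 2)⁻¹ := by
      rw [hψd]; exact hI.deriv
    have h2 : deriv φ y = deriv f y := by rw [hφd]; exact deriv_const_add w
    rw [hd, h2, hψd]
    rw [smul_eq_mul, sq, mul_inv]
    ring
  -- main induction: bounds on derivatives of ψ
  have key : ∀ n : ℕ, ∃ c : ℝ, 0 < c ∧ ∀ i ≤ n, ∀ x : ℝ,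
      ‖iteratedDeriv i ψ x‖ ≤ c * (1 + x ^ 2) ^ (EE β i) := by
    intro n
    induction n with
    | zero =>
      refine ⟨δ⁻¹, by positivity, fun i hi x => ?_⟩
      rw [Nat.le_zero.mp hi]
      simpa [EE] using hψbd x
    | succ n ih =>
      obtain ⟨c, hc, hb⟩ := ih
      obtain ⟨cf, hcf, hbf⟩ := hfc (n + 1)
      -- bounds on derivatives of ψ * ψ
      have hB : ∀ j ≤ n, ∀ x : ℝ, ‖iteratedDeriv j (fun y => ψ y * ψ y) x‖ ≤
          2 ^ n * (c * c) * (1 + x ^ 2) ^ (EE' j) := by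
        intro j hj x
        have := leibniz_bound hpsiI hpsiI j hc.le hc.le (EE β) (EE β) (EE' j)
          (fun i hi x => hb i (le_trans hi hj) x)
          (fun i hi x => hb i (le_trans hi hj) x)
          (fun i hi => EE_sum hβ hi) x
        refine le_trans this ?_
        apply mul_le_mul_of_nonneg_right _ (by positivity)
        apply mul_le_mul_of_nonneg_right _ (by positivity)
        exact pow_le_pow_right₀ one_le_two hj
      -- bound on the (n+1)-st derivative of ψ
      have hstep : ∀ x : ℝ, ‖iteratedDeriv (n + 1) ψ x‖ ≤
          2 ^ n * (cf * (2 ^ n * (c * c))) * (1 + x ^ 2) ^ ((β - (n + 1 : ℕ)) / 2) := by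
        intro x
        have hAI : ContDiff ℝ ∞ (deriv f) := (contDiff_infty_iff_deriv.mp hfI).2
        have hrw : iteratedDeriv (n + 1) ψ x =
            -(iteratedDeriv n (fun y => deriv f y * (ψ y * ψ y)) x) := by
          rw [iteratedDeriv_succ', hderψ]
          exact iteratedDeriv_neg n _ x
        rw [hrw, norm_neg]
        apply leibniz_bound hAI (hpsiI.mul hpsiI) n hcf.le (by positivity)
          (fun i => (β - (i + 1 : ℕ)) / 2) EE' _ ?_ hB ?_
        · intro i hi x
          rw [← iteratedDeriv_succ']
          exact hbf (i + 1) (by omega) x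
        · intro i hi
          have hc2 : ((n - i : ℕ) : ℝ) = (n : ℝ) - i := by
            push_cast [Nat.cast_sub hi]; ring
          simp only [EE']
          split_ifs with hni
          · have hin : i = n := by omega
            subst hin
            push_cast; linarith
          · rw [hc2]; push_cast; linarith
      refine ⟨max c (2 ^ n * (cf * (2 ^ n * (c * c)))),
        lt_max_of_lt_left hc, fun i hi x => ?_⟩
      rcases Nat.lt_succ_iff_lt_or_eq.mp (Nat.lt_succ_of_le hi) with h | h
      · exact le_trans (hb i (Nat.lt_succ_iff.mp h) x)
          (mul_le_mul_of_nonneg_right (le_max_left _ _) (by positivity))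
      · subst h
        refine le_trans (hstep x) ?_
        have hEE : EE β (n + 1) = (β - (n + 1 : ℕ)) / 2 := by
          unfold EE; rw [if_neg (Nat.succ_ne_zero n)]
        rw [hEE]
        exact mul_le_mul_of_nonneg_right (le_max_right _ _) (by positivity)
  -- define g and conclude
  refine ⟨fun x => ψ x - w⁻¹, ?_, ?_⟩
  · rw [Acal, mem_iUnion₂]
    refine ⟨β, hβ, hψsm.sub contDiff_const, fun n => ?_⟩
    cases n with
    | zero =>
      obtain ⟨c₀, hc₀, hb₀⟩ := hfb 0
      have hwn : (0:ℝ) < ‖w‖ := norm_pos_iff.mpr hw0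
      refine ⟨‖w‖⁻¹ * δ⁻¹ * c₀, by positivity, fun x => ?_⟩
      have hwa : w + f x ≠ 0 := hφ0 x
      have hval : ψ x - w⁻¹ = -(f x * (w⁻¹ * ψ x)) := by
        show (w + f x)⁻¹ - w⁻¹ = -(f x * (w⁻¹ * (w + f x)⁻¹))
        field_simp
        ring
      rw [iteratedDeriv_zero, hval, norm_neg, norm_mul, norm_mul, norm_inv]
      calc ‖f x‖ * (‖w‖⁻¹ * ‖ψ x‖)
          ≤ (c₀ * (1 + x ^ 2) ^ ((β - (0:ℕ)) / 2)) * (‖w‖⁻¹ * δ⁻¹) := by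
            apply mul_le_mul (hb₀ x) _ (by positivity) (by positivity)
            exact mul_le_mul_of_nonneg_left (hψbd x) (by positivity)
        _ = ‖w‖⁻¹ * δ⁻¹ * c₀ * (1 + x ^ 2) ^ ((β - (0:ℕ)) / 2) := by ring
    | succ m =>
      obtain ⟨c, hc, hb⟩ := key (m + 1)
      refine ⟨c, hc, fun x => ?_⟩
      have heq : iteratedDeriv (m + 1) (fun x => ψ x - w⁻¹) x =
          iteratedDeriv (m + 1) ψ x := by
        rw [iteratedDeriv_succ', iteratedDeriv_succ']
        congr 1
        funext y
        exact deriv_sub_const w⁻¹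
      rw [heq]
      have := hb (m + 1) le_rfl x
      rwa [show EE β (m + 1) = (β - ((m+1:ℕ):ℝ)) / 2 by
        unfold EE; rw [if_neg (Nat.succ_ne_zero m)]] at this
  · intro x
    have h1 : z + f x - l = φ x := by rw [hφd, hw]; ring
    rw [h1, hψd]
    ring
end
end

section
/- Let H be self-adjoint on a Hilbert space and suppose a functional calculus Φ : C₀(ℝ) → B(H) satisfies: Φ is an algebra homomorphism, Φ(conj f) = Φ(f)*, ‖Φ(f)‖ ≤ ‖f‖_∞, and Φ((z−·)⁻¹) = (z−H)⁻¹ for all z ∉ ℝ. If λ ∈ ℂ is not in the closure of f(σ(H)) for some f ∈ C₀(ℝ), then λ ∉ σ(Φ(f)). -/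
/-!
The map `x ↦ (I - x)⁻¹` identifies the one-point compactification of `ℝ` with the circle
`|z + I/2| = 1/2`, the point at infinity going to `0`. Hence `C₀(ℝ)` is `C(circle)₀`, which by
Stone–Weierstrass is generated as a C⋆-algebra by the identity, i.e. by the resolvent
`x ↦ (I - x)⁻¹`. So the continuous ⋆-homomorphism `Φ` is determined by `Φ((I - ·)⁻¹) = (I - A)⁻¹`
and coincides with the continuous functional calculus `h ↦ h(A)`; the spectral mapping theorem
then gives `σ(Φ f) = f(σ(A))`.
-/

open Set Filter Topology Bornology Complex ZeroAtInfty ContinuousMapZero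

noncomputable section

def resolventCircle : Set ℂ := Metric.sphere (-(I / 2)) 2⁻¹

lemma mem_resolventCircle_iff_im_inv {z : ℂ} (hz : z ≠ 0) :
    z ∈ resolventCircle ↔ (z⁻¹).im = 1 := by
  have hns : normSq z ≠ 0 := normSq_eq_zero.not.mpr hz
  rw [resolventCircle, mem_sphere_iff_norm, ← sq_eq_sq₀ (norm_nonneg _) (by norm_num),
    ← normSq_eq_norm_sq, inv_im, div_eq_iff hns]
  have hc : z - -(I / 2) = ⟨z.re, z.im + 2⁻¹⟩ := by apply Complex.ext <;> simp
  rw [hc, normSq_mk, normSq_apply]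
  constructor <;> intro h <;> linarith

instance : Fact ((0 : ℂ) ∈ resolventCircle) := ⟨by simp [resolventCircle]⟩

instance : CompactSpace resolventCircle := isCompact_iff_compactSpace.mp (isCompact_sphere _ _)

lemma I_sub_ofReal_ne_zero (x : ℝ) : I - x ≠ 0 := fun h => by simpa using congrArg im h

lemma inv_I_sub_ofReal_mem_resolventCircle (x : ℝ) : (I - x)⁻¹ ∈ resolventCircle := by
  rw [mem_resolventCircle_iff_im_inv (inv_ne_zero (I_sub_ofReal_ne_zero x))]
  simp

def realToResolventCircle (x : ℝ) : resolventCircle :=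
  ⟨(I - x)⁻¹, inv_I_sub_ofReal_mem_resolventCircle x⟩

lemma continuous_realToResolventCircle : Continuous realToResolventCircle :=
  ((continuous_const.sub continuous_ofReal).inv₀ I_sub_ofReal_ne_zero).subtype_mk _

lemma tendsto_realToResolventCircle_cocompact :
    Tendsto realToResolventCircle (cocompact ℝ) (𝓝 0) := by
  rw [IsEmbedding.subtypeVal.tendsto_nhds_iff]
  refine tendsto_inv₀_cobounded.comp ((tendsto_const_sub_cobounded I).comp ?_)
  rw [← Metric.cobounded_eq_cocompact]
  exact RCLike.tendsto_ofReal_cobounded_cobounded ℂ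

-- The inverse of `realToResolventCircle` on the punctured circle.
def resolventCircleToReal (z : ℂ) : ℝ := -(z⁻¹).re

lemma norm_inv_le_norm_resolventCircleToReal_add_one {z : ℂ} (hz : z ∈ resolventCircle)
    (h0 : z ≠ 0) : ‖z⁻¹‖ ≤ ‖resolventCircleToReal z‖ + 1 := by
  calc ‖z⁻¹‖ ≤ |(z⁻¹).re| + |(z⁻¹).im| := norm_le_abs_re_add_abs_im _
  _ = _ := by rw [(mem_resolventCircle_iff_im_inv h0).mp hz, resolventCircleToReal, norm_neg,
    Real.norm_eq_abs, abs_one]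

lemma continuousAt_resolventCircleToReal {z : ℂ} (hz : z ≠ 0) :
    ContinuousAt resolventCircleToReal z := by
  unfold resolventCircleToReal
  exact (continuous_re.continuousAt.comp (continuousAt_inv₀ hz)).neg

lemma tendsto_resolventCircleToReal_cocompact :
    Tendsto (fun z : resolventCircle => resolventCircleToReal z) (𝓝[≠] 0) (cocompact ℝ) := by
  rw [← Metric.cobounded_eq_cocompact, ← tendsto_norm_atTop_iff_cobounded]
  have hval : Tendsto (Subtype.val : resolventCircle → ℂ) (𝓝[≠] 0) (𝓝[≠] 0) :=
    continuous_subtype_val.continuousWithinAt.tendsto_nhdsWithin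
      fun z hz => Subtype.val_injective.ne hz
  refine tendsto_atTop_mono' _ ?_
    (tendsto_atTop_add_const_right _ (-1) (tendsto_norm_inv_nhdsNE_zero_atTop.comp hval))
  filter_upwards [self_mem_nhdsWithin] with z hz
  have := norm_inv_le_norm_resolventCircleToReal_add_one z.2 (Subtype.val_injective.ne hz)
  simp only [Function.comp_apply]
  linarith

lemma resolventCircleToReal_realToResolventCircle (x : ℝ) :
    resolventCircleToReal (realToResolventCircle x) = x := by
  simp [resolventCircleToReal, realToResolventCircle]

def compRealToResolventCircle : C(resolventCircle, ℂ)₀ →⋆ₙₐ[ℂ] C₀(ℝ, ℂ) where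
  toFun g := ⟨⟨g ∘ realToResolventCircle, g.continuous.comp continuous_realToResolventCircle⟩, by
    simpa only [map_zero] using
      (map_continuous g |>.tendsto 0).comp tendsto_realToResolventCircle_cocompact⟩
  map_smul' _ _ := rfl
  map_zero' := rfl
  map_add' _ _ := rfl
  map_mul' _ _ := rfl
  map_star' _ := rfl

@[simp]
lemma compRealToResolventCircle_apply (g : C(resolventCircle, ℂ)₀) (x : ℝ) :
    compRealToResolventCircle g x = g (realToResolventCircle x) := rfl

lemma norm_compRealToResolventCircle_le (g : C(resolventCircle, ℂ)₀) :
    ‖compRealToResolventCircle g‖ ≤ ‖g‖ := by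
  rw [← ZeroAtInftyContinuousMap.norm_toBCF_eq_norm]
  refine (BoundedContinuousFunction.norm_le (norm_nonneg g)).mpr fun x => ?_
  exact ContinuousMap.norm_coe_le_norm (g : C(resolventCircle, ℂ)) _

lemma continuous_compRealToResolventCircle : Continuous compRealToResolventCircle :=
  AddMonoidHomClass.continuous_of_bound compRealToResolventCircle 1
    (by simpa using norm_compRealToResolventCircle_le)

lemma compRealToResolventCircle_surjective : Function.Surjective compRealToResolventCircle := by
  intro f
  classical
  let G : resolventCircle → ℂ := Function.update (fun z => f (resolventCircleToReal z)) 0 0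
  have hG : Continuous G := by
    refine continuous_iff_continuousAt.mpr fun z => ?_
    rcases eq_or_ne z 0 with rfl | hz
    · exact continuousAt_update_same.mpr
        ((zero_at_infty f).comp tendsto_resolventCircleToReal_cocompact)
    · rw [continuousAt_update_of_ne hz]
      exact f.continuous.continuousAt.comp <| (continuousAt_resolventCircleToReal
        (Subtype.val_injective.ne hz)).comp continuous_subtype_val.continuousAt
  refine ⟨⟨⟨G, hG⟩, by simp [G]⟩, ZeroAtInftyContinuousMap.ext fun x => ?_⟩
  have hx : realToResolventCircle x ≠ 0 := fun h =>
    inv_ne_zero (I_sub_ofReal_ne_zero x) (congrArg Subtype.val h)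
  simp [G, Function.update_of_ne hx, resolventCircleToReal_realToResolventCircle]

def resolventAtI : C₀(ℝ, ℂ) := compRealToResolventCircle (.id resolventCircle)

@[simp]
lemma resolventAtI_apply (x : ℝ) : resolventAtI x = (I - x)⁻¹ := rfl

theorem nonUnitalStarAlgHom_ext_resolventAtI {𝒜 : Type*} [TopologicalSpace 𝒜]
    [NonUnitalRing 𝒜] [StarRing 𝒜] [Module ℂ 𝒜] [IsScalarTower ℂ 𝒜 𝒜] [SMulCommClass ℂ 𝒜 𝒜]
    [UniqueHom ℂ 𝒜]
    {φ ψ : C₀(ℝ, ℂ) →⋆ₙₐ[ℂ] 𝒜} (hφ : Continuous φ) (hψ : Continuous ψ)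
    (h : φ resolventAtI = ψ resolventAtI) : φ = ψ := by
  have hcomp : φ.comp compRealToResolventCircle = ψ.comp compRealToResolventCircle :=
    UniqueHom.eq_of_continuous_of_map_id resolventCircle _ _
      (hφ.comp continuous_compRealToResolventCircle)
      (hψ.comp continuous_compRealToResolventCircle) h
  ext f
  obtain ⟨g, rfl⟩ := compRealToResolventCircle_surjective f
  exact DFunLike.congr_fun hcomp g

section cfcRe

variable {𝒜 : Type*} [CStarAlgebra 𝒜] (a : 𝒜)

def cfcRe : C₀(ℝ, ℂ) →⋆ₙₐ[ℂ] 𝒜 where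
  toFun h := cfc (fun w : ℂ => h w.re) a
  map_smul' c h := cfc_smul c (fun w : ℂ => h w.re) a
  map_zero' := by simp
  map_add' h₁ h₂ := cfc_add a (fun w : ℂ => h₁ w.re) (fun w : ℂ => h₂ w.re)
  map_mul' h₁ h₂ := cfc_mul (fun w : ℂ => h₁ w.re) (fun w : ℂ => h₂ w.re) a
  map_star' h := cfc_star (fun w : ℂ => h w.re) a

lemma cfcRe_apply (h : C₀(ℝ, ℂ)) : cfcRe a h = cfc (fun w : ℂ => h w.re) a := rfl

lemma norm_cfcRe_le (h : C₀(ℝ, ℂ)) : ‖cfcRe a h‖ ≤ ‖h‖ := by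
  refine norm_cfc_le (norm_nonneg h) fun w _ => ?_
  rw [← ZeroAtInftyContinuousMap.norm_toBCF_eq_norm]
  exact BoundedContinuousFunction.norm_coe_le_norm h.toBCF w.re

lemma continuous_cfcRe : Continuous (cfcRe a) :=
  AddMonoidHomClass.continuous_of_bound (cfcRe a) 1 (by simpa using norm_cfcRe_le a)

variable {a}

lemma I_smul_one_sub_mul_cfcRe_resolventAtI (ha : IsSelfAdjoint a) :
    (I • (1 : 𝒜) - a) * cfcRe a resolventAtI = 1 := by
  have : IsStarNormal a := ha.isStarNormal
  have hsub : I • (1 : 𝒜) - a = cfc (fun w : ℂ => I - w) a := by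
    rw [cfc_sub (fun _ : ℂ => I) (fun w : ℂ => w) a, cfc_const I a, cfc_id' ℂ a,
      Algebra.algebraMap_eq_smul_one]
  rw [hsub, cfcRe_apply, ← cfc_mul (fun w : ℂ => I - w) (fun w : ℂ => resolventAtI w.re) a,
    ← cfc_one ℂ a]
  refine cfc_congr fun w hw => ?_
  rw [resolventAtI_apply, Pi.one_apply]
  nth_rewrite 1 [ha.mem_spectrum_eq_re hw]
  exact mul_inv_cancel₀ (I_sub_ofReal_ne_zero w.re)

lemma spectrum_cfcRe (ha : IsSelfAdjoint a) (h : C₀(ℝ, ℂ)) :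
    spectrum ℂ (cfcRe a h) = h '' {x : ℝ | (x : ℂ) ∈ spectrum ℂ a} := by
  have : IsStarNormal a := ha.isStarNormal
  rw [cfcRe_apply, cfc_map_spectrum (fun w : ℂ => h w.re) a]
  ext l
  constructor
  · rintro ⟨w, hw, rfl⟩
    exact ⟨w.re, by rwa [mem_ofPred_eq, ← ha.mem_spectrum_eq_re hw], rfl⟩
  · rintro ⟨x, hx, rfl⟩
    exact ⟨x, hx, by simp⟩

end cfcRe

theorem stmt11 {H : Type*} [NormedAddCommGroup H] [InnerProductSpace ℂ H]
    [CompleteSpace H]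
    (A : H →L[ℂ] H) (hA : IsSelfAdjoint A)
    (Φ : C₀(ℝ, ℂ) → (H →L[ℂ] H))
    (hadd : ∀ f g, Φ (f + g) = Φ f + Φ g)
    (hsmul : ∀ (c : ℂ) f, Φ (c • f) = c • Φ f)
    (hmul : ∀ f g, Φ (f * g) = Φ f * Φ g)
    (hstar : ∀ f, Φ (star f) = star (Φ f))
    (hnorm : ∀ f, ‖Φ f‖ ≤ ‖f‖)
    (hres : ∀ (g : C₀(ℝ, ℂ)) (z : ℂ), z.im ≠ 0 →
      (∀ x : ℝ, g x = (z - x)⁻¹) →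
      Φ g * (z • (1 : H →L[ℂ] H) - A) = 1 ∧ (z • (1 : H →L[ℂ] H) - A) * Φ g = 1)
    (f : C₀(ℝ, ℂ)) (l : ℂ)
    (hl : l ∉ closure (f '' {x : ℝ | (x : ℂ) ∈ spectrum ℂ A})) :
    l ∉ spectrum ℂ (Φ f) := by
  let Φ' : C₀(ℝ, ℂ) →⋆ₙₐ[ℂ] (H →L[ℂ] H) :=
    { toFun := Φ
      map_smul' := hsmul
      map_zero' := by simpa using hsmul 0 0
      map_add' := hadd
      map_mul' := hmul
      map_star' := hstar }
  have hΦ_cont : Continuous Φ' := AddMonoidHomClass.continuous_of_bound Φ' 1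
    fun f => (hnorm f).trans_eq (one_mul _).symm
  have hΦ_res : Φ' resolventAtI = cfcRe A resolventAtI :=
    left_inv_eq_right_inv (hres resolventAtI I (by simp) resolventAtI_apply).1
      (I_smul_one_sub_mul_cfcRe_resolventAtI hA)
  have hΦ_eq : Φ f = cfcRe A f :=
    DFunLike.congr_fun (nonUnitalStarAlgHom_ext_resolventAtI hΦ_cont (continuous_cfcRe A) hΦ_res) f
  rw [hΦ_eq, spectrum_cfcRe hA]
  exact fun hmem => hl (subset_closure hmem)
end
end

section
/- The finite linear span of the functions x ↦ 1/(x − ω), with ω ranging over ℂ \ ℝ, is dense in C₀(ℝ) with respect to the supremum norm. -/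
/-!
Let `V` be the closure of the span of the resolvents `r_ω x = (x - ω)⁻¹`. It is stable under
conjugation, as `conj r_ω = r_{conj ω}`, and under products, by the resolvent identity
`r_ω - r_μ = (ω - μ) r_ω r_μ`; the square `r_ω ^ 2` is the limit of `r_ω r_{ω + t}` as `t → 0`.
So `V` is a closed non-unital star subalgebra of `C₀(ℝ, ℂ)`, and it separates points and vanishes
nowhere because `r_i` is injective and nowhere zero. Stone–Weierstrass for `C₀` then gives
`V = C₀(ℝ, ℂ)`; it reduces to the compact case on the one-point compactification, where the
functions `a` with `a - a ∞ ∈ V` form a closed star subalgebra separating points.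
-/

open Set Filter Topology ZeroAtInfty OnePoint

section ClosureSpan

variable {R A : Type*} [CommSemiring R] [NonUnitalNonAssocSemiring A] [Module R A]
  [TopologicalSpace A] [IsTopologicalSemiring A] [ContinuousConstSMul R A] {s : Set A} {x y : A}

theorem Submodule.mul_mem_topologicalClosure_span [IsScalarTower R A A] [SMulCommClass R A A]
    (hs : ∀ a ∈ s, ∀ b ∈ s, a * b ∈ (span R s).topologicalClosure)
    (hx : x ∈ (span R s).topologicalClosure) (hy : y ∈ (span R s).topologicalClosure) :
    x * y ∈ (span R s).topologicalClosure := by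
  have hspan : map₂ (LinearMap.mul R A) (span R s) (span R s) ≤ (span R s).topologicalClosure := by
    rw [map₂_span_span, span_le]
    rintro _ ⟨a, ha, b, hb, rfl⟩
    exact hs a ha b hb
  have := map_mem_closure₂ continuous_mul hx hy fun a ha b hb => hspan (apply_mem_map₂ _ ha hb)
  rwa [(span R s).isClosed_topologicalClosure.closure_eq] at this

theorem Submodule.star_mem_topologicalClosure_span [StarRing R] [StarAddMonoid A]
    [StarModule R A] [ContinuousStar A] (hs : ∀ a ∈ s, star a ∈ s)
    (hx : x ∈ (span R s).topologicalClosure) :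
    star x ∈ (span R s).topologicalClosure := by
  have hspan : ∀ a ∈ span R s, star a ∈ span R s := by
    intro a ha
    induction ha using span_induction with
    | mem a ha => exact subset_span (hs a ha)
    | zero => simp
    | add a b _ _ ha hb => rw [star_add]; exact add_mem ha hb
    | smul c a _ ha => rw [star_smul]; exact smul_mem _ _ ha
  exact map_mem_closure continuous_star hx hspan

end ClosureSpan

lemma Complex.ofReal_sub_ne_zero {ω : ℂ} (hω : ω.im ≠ 0) (x : ℝ) : (x : ℂ) - ω ≠ 0 := fun h =>
  hω (by simpa using (congrArg Complex.im h).symm)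

namespace ZeroAtInftyContinuousMap

section OnePoint

variable {X 𝕜 : Type*} [TopologicalSpace X] [R1Space X] [RCLike 𝕜]

def toOnePoint (f : C₀(X, 𝕜)) : C(OnePoint X, 𝕜) :=
  continuousMapMk f 0 (by simpa using zero_at_infty f)

@[simp] lemma toOnePoint_coe (f : C₀(X, 𝕜)) (x : X) : toOnePoint f x = f x := rfl

@[simp] lemma toOnePoint_infty (f : C₀(X, 𝕜)) : toOnePoint f ∞ = 0 := rfl

def ofOnePoint (a : C(OnePoint X, 𝕜)) : C₀(X, 𝕜) where
  toFun x := a x - a ∞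
  continuous_toFun := (a.continuous.comp continuous_coe).sub continuous_const
  zero_at_infty' := by
    have h := a.continuous.continuousAt (x := ∞)
    rw [continuousAt_infty', coclosedCompact_eq_cocompact] at h
    simpa using h.sub_const (a ∞)

@[simp] lemma ofOnePoint_apply (a : C(OnePoint X, 𝕜)) (x : X) : ofOnePoint a x = a x - a ∞ := rfl

@[simp] lemma ofOnePoint_toOnePoint (f : C₀(X, 𝕜)) : ofOnePoint (toOnePoint f) = f := by
  ext x; simp

lemma ofOnePoint_add (a b : C(OnePoint X, 𝕜)) :
    ofOnePoint (a + b) = ofOnePoint a + ofOnePoint b := by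
  ext x; simp; ring

lemma ofOnePoint_smul (c : 𝕜) (a : C(OnePoint X, 𝕜)) : ofOnePoint (c • a) = c • ofOnePoint a := by
  ext x; simp; ring

lemma ofOnePoint_algebraMap (c : 𝕜) : ofOnePoint (algebraMap 𝕜 C(OnePoint X, 𝕜) c) = 0 := by
  ext x; simp

lemma ofOnePoint_mul (a b : C(OnePoint X, 𝕜)) :
    ofOnePoint (a * b) =
      ofOnePoint a * ofOnePoint b + b ∞ • ofOnePoint a + a ∞ • ofOnePoint b := by
  ext x; simp; ring

lemma ofOnePoint_star (a : C(OnePoint X, 𝕜)) : ofOnePoint (star a) = star (ofOnePoint a) := by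
  ext x; simp

lemma norm_ofOnePoint_le (a : C(OnePoint X, 𝕜)) : ‖ofOnePoint a‖ ≤ 2 * ‖a‖ := by
  rw [← norm_toBCF_eq_norm]
  refine (BoundedContinuousFunction.norm_le (by positivity)).2 fun x => ?_
  calc ‖a x - a ∞‖ ≤ ‖a x‖ + ‖a ∞‖ := norm_sub_le _ _
    _ ≤ ‖a‖ + ‖a‖ := add_le_add (a.norm_coe_le_norm _) (a.norm_coe_le_norm _)
    _ = 2 * ‖a‖ := by ring

lemma continuous_ofOnePoint : Continuous (ofOnePoint : C(OnePoint X, 𝕜) → C₀(X, 𝕜)) :=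
  AddMonoidHomClass.continuous_of_bound (AddMonoidHom.mk' ofOnePoint ofOnePoint_add) 2
    norm_ofOnePoint_le

def comapOfOnePoint (V : NonUnitalStarSubalgebra 𝕜 C₀(X, 𝕜)) :
    StarSubalgebra 𝕜 C(OnePoint X, 𝕜) where
  carrier := {a | ofOnePoint a ∈ V}
  add_mem' {a b} ha hb := by
    simpa only [mem_ofPred_eq, ofOnePoint_add] using add_mem ha hb
  mul_mem' {a b} ha hb := by
    simp only [mem_ofPred_eq, ofOnePoint_mul] at ha hb ⊢
    exact add_mem (add_mem (mul_mem ha hb) (SMulMemClass.smul_mem _ ha))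
      (SMulMemClass.smul_mem _ hb)
  algebraMap_mem' c := by simp [ofOnePoint_algebraMap]
  star_mem' {a} ha := by
    simpa only [mem_ofPred_eq, ofOnePoint_star] using star_mem ha

@[simp] lemma mem_comapOfOnePoint {V : NonUnitalStarSubalgebra 𝕜 C₀(X, 𝕜)}
    {a : C(OnePoint X, 𝕜)} :
    a ∈ comapOfOnePoint V ↔ ofOnePoint a ∈ V :=
  Iff.rfl

lemma isClosed_comapOfOnePoint {V : NonUnitalStarSubalgebra 𝕜 C₀(X, 𝕜)}
    (hV : IsClosed (V : Set C₀(X, 𝕜))) : IsClosed (comapOfOnePoint V : Set C(OnePoint X, 𝕜)) :=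
  hV.preimage continuous_ofOnePoint

lemma comapOfOnePoint_separatesPoints {V : NonUnitalStarSubalgebra 𝕜 C₀(X, 𝕜)}
    (hsep : ∀ x y : X, x ≠ y → ∃ f ∈ V, f x ≠ f y) (hnz : ∀ x : X, ∃ f ∈ V, f x ≠ 0) :
    (comapOfOnePoint V).SeparatesPoints := by
  have hsepOnePoint : ∀ p q : OnePoint X, p ≠ q → ∃ f ∈ V, toOnePoint f p ≠ toOnePoint f q := by
    intro p q hpq
    induction p using OnePoint.rec <;> induction q using OnePoint.rec
    · exact absurd rfl hpq
    · obtain ⟨f, hf, hfy⟩ := hnz _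
      exact ⟨f, hf, by simpa using hfy.symm⟩
    · obtain ⟨f, hf, hfx⟩ := hnz _
      exact ⟨f, hf, by simpa using hfx⟩
    · obtain ⟨f, hf, hfxy⟩ := hsep _ _ (fun h => hpq (congrArg _ h))
      exact ⟨f, hf, by simpa using hfxy⟩
  intro p q hpq
  obtain ⟨f, hf, hfpq⟩ := hsepOnePoint p q hpq
  exact ⟨_, ⟨toOnePoint f, by simpa using hf, rfl⟩, hfpq⟩

theorem nonUnitalStarSubalgebra_eq_top_of_separatesPoints
    (V : NonUnitalStarSubalgebra 𝕜 C₀(X, 𝕜)) (hV : IsClosed (V : Set C₀(X, 𝕜)))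
    (hsep : ∀ x y : X, x ≠ y → ∃ f ∈ V, f x ≠ f y)
    (hnz : ∀ x : X, ∃ f ∈ V, f x ≠ 0) : V = ⊤ := by
  have htop : comapOfOnePoint V = ⊤ := eq_top_iff.2 <|
    (ContinuousMap.starSubalgebra_topologicalClosure_eq_top_of_separatesPoints _
      (comapOfOnePoint_separatesPoints hsep hnz)).ge.trans
      (StarSubalgebra.topologicalClosure_minimal le_rfl (isClosed_comapOfOnePoint hV))
  refine NonUnitalStarAlgebra.eq_top_iff.2 fun f => ?_
  simpa using htop.ge (StarSubalgebra.mem_top (x := toOnePoint f))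

end OnePoint

section Resolvent

variable {ω μ : ℂ}

noncomputable def resolvent (ω : ℂ) (hω : ω.im ≠ 0) : C₀(ℝ, ℂ) where
  toFun x := ((x : ℂ) - ω)⁻¹
  continuous_toFun :=
    (Complex.continuous_ofReal.sub continuous_const).inv₀ (Complex.ofReal_sub_ne_zero hω)
  zero_at_infty' := by
    have hsub : Isometry fun x : ℝ => (x : ℂ) - ω :=
      (IsometryEquiv.subRight ω).isometry.comp Complex.isometry_ofReal
    have hinv := tendsto_inv₀_cobounded (α := ℂ)
    rw [Metric.cobounded_eq_cocompact] at hinv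
    exact hinv.comp hsub.isClosedEmbedding.tendsto_cocompact

@[simp] lemma resolvent_apply (hω : ω.im ≠ 0) (x : ℝ) : resolvent ω hω x = ((x : ℂ) - ω)⁻¹ := rfl

lemma resolvent_apply_ne_zero (hω : ω.im ≠ 0) (x : ℝ) : resolvent ω hω x ≠ 0 :=
  inv_ne_zero (Complex.ofReal_sub_ne_zero hω x)

lemma resolvent_injective (hω : ω.im ≠ 0) : Function.Injective (resolvent ω hω) := by
  intro x y h
  simpa using inv_injective h

lemma norm_resolvent_le (hω : ω.im ≠ 0) : ‖resolvent ω hω‖ ≤ |ω.im|⁻¹ := by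
  rw [← norm_toBCF_eq_norm]
  refine (BoundedContinuousFunction.norm_le (by positivity)).2 fun x => ?_
  show ‖((x : ℂ) - ω)⁻¹‖ ≤ |ω.im|⁻¹
  rw [norm_inv]
  refine inv_anti₀ (abs_pos.2 hω) ?_
  simpa using Complex.abs_im_le_norm ((x : ℂ) - ω)

lemma star_resolvent (hω : ω.im ≠ 0) :
    star (resolvent ω hω) = resolvent (starRingEnd ℂ ω) (by simpa using hω) := by
  ext x
  simp [Complex.conj_ofReal]

lemma resolvent_sub_resolvent (hω : ω.im ≠ 0) (hμ : μ.im ≠ 0) :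
    resolvent ω hω - resolvent μ hμ = (ω - μ) • (resolvent ω hω * resolvent μ hμ) := by
  ext x
  have hx := Complex.ofReal_sub_ne_zero hω x
  have hy := Complex.ofReal_sub_ne_zero hμ x
  simp only [coe_sub, coe_smul, coe_mul, Pi.sub_apply, Pi.smul_apply, Pi.mul_apply,
    resolvent_apply, smul_eq_mul]
  field_simp
  ring

lemma tendsto_resolvent_add_ofReal (hω : ω.im ≠ 0) :
    Tendsto (fun t : ℝ => resolvent (ω + t) (by simpa using hω)) (𝓝 0) (𝓝 (resolvent ω hω)) := by
  rw [tendsto_iff_norm_sub_tendsto_zero]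
  refine squeeze_zero (fun _ => norm_nonneg _) (fun t => ?_)
    (g := fun t : ℝ => |t| * (|ω.im|⁻¹ * |ω.im|⁻¹)) ?_
  · rw [resolvent_sub_resolvent, norm_smul]
    calc ‖ω + t - ω‖ * ‖resolvent (ω + t) _ * resolvent ω hω‖
        ≤ |t| * (‖resolvent (ω + t) _‖ * ‖resolvent ω hω‖) := by
          rw [add_sub_cancel_left, Complex.norm_real, Real.norm_eq_abs]
          gcongr
          exact norm_mul_le _ _
      _ ≤ |t| * (|ω.im|⁻¹ * |ω.im|⁻¹) := by
          gcongr
          · simpa using norm_resolvent_le (ω := ω + t) _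
          · exact norm_resolvent_le hω
  · simpa using (continuous_abs.tendsto (0 : ℝ)).mul_const (|ω.im|⁻¹ * |ω.im|⁻¹)

def resolvents : Set C₀(ℝ, ℂ) :=
  {g | ∃ ω : ℂ, ω.im ≠ 0 ∧ ∀ x : ℝ, g x = ((x : ℂ) - ω)⁻¹}

lemma resolvent_mem_resolvents (hω : ω.im ≠ 0) : resolvent ω hω ∈ resolvents :=
  ⟨ω, hω, fun _ => rfl⟩

lemma exists_eq_resolvent_of_mem_resolvents {g : C₀(ℝ, ℂ)} (hg : g ∈ resolvents) :
    ∃ ω, ∃ hω : ω.im ≠ 0, g = resolvent ω hω := by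
  obtain ⟨ω, hω, hg⟩ := hg
  exact ⟨ω, hω, ext hg⟩

lemma star_mem_resolvents {g : C₀(ℝ, ℂ)} (hg : g ∈ resolvents) : star g ∈ resolvents := by
  obtain ⟨ω, hω, rfl⟩ := exists_eq_resolvent_of_mem_resolvents hg
  rw [star_resolvent]
  exact resolvent_mem_resolvents _

open Submodule in
lemma resolvent_mul_resolvent_mem_span (hω : ω.im ≠ 0) (hμ : μ.im ≠ 0) (hne : ω ≠ μ) :
    resolvent ω hω * resolvent μ hμ ∈ span ℂ resolvents := by
  rw [← inv_smul_smul₀ (sub_ne_zero.2 hne) (resolvent ω hω * resolvent μ hμ),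
    ← resolvent_sub_resolvent]
  exact smul_mem _ _ (sub_mem (subset_span (resolvent_mem_resolvents hω))
    (subset_span (resolvent_mem_resolvents hμ)))

open Submodule in
lemma resolvent_mul_self_mem_topologicalClosure_span (hω : ω.im ≠ 0) :
    resolvent ω hω * resolvent ω hω ∈ (span ℂ resolvents).topologicalClosure := by
  have hlim : Tendsto (fun t : ℝ => resolvent ω hω * resolvent (ω + t) (by simpa using hω))
      (𝓝[≠] 0) (𝓝 (resolvent ω hω * resolvent ω hω)) :=
    ((tendsto_resolvent_add_ofReal hω).mono_left nhdsWithin_le_nhds).const_mul _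
  have hspan : ∀ᶠ t : ℝ in 𝓝[≠] 0,
      resolvent ω hω * resolvent (ω + t) (by simpa using hω) ∈ span ℂ resolvents :=
    eventually_nhdsWithin_of_forall fun t ht =>
      resolvent_mul_resolvent_mem_span _ _ (by simpa using ht)
  exact (span ℂ resolvents).isClosed_topologicalClosure.mem_of_tendsto hlim
    (hspan.mono fun _ h => le_topologicalClosure _ h)

lemma mul_mem_topologicalClosure_span_resolvents {f g : C₀(ℝ, ℂ)} (hf : f ∈ resolvents)
    (hg : g ∈ resolvents) : f * g ∈ (Submodule.span ℂ resolvents).topologicalClosure := by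
  obtain ⟨ω, hω, rfl⟩ := exists_eq_resolvent_of_mem_resolvents hf
  obtain ⟨μ, hμ, rfl⟩ := exists_eq_resolvent_of_mem_resolvents hg
  obtain rfl | hne := eq_or_ne ω μ
  · exact resolvent_mul_self_mem_topologicalClosure_span hω
  · exact Submodule.le_topologicalClosure _ (resolvent_mul_resolvent_mem_span hω hμ hne)

open Submodule in
noncomputable def resolventAlgebra : NonUnitalStarSubalgebra ℂ C₀(ℝ, ℂ) :=
  { (span ℂ resolvents).topologicalClosure with
    mul_mem' := fun hf hg =>
      mul_mem_topologicalClosure_span (fun _ hf _ hg =>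
        mul_mem_topologicalClosure_span_resolvents hf hg) hf hg
    star_mem' := fun hf => star_mem_topologicalClosure_span (fun _ => star_mem_resolvents) hf }

theorem dense_span_resolvents : Dense (Submodule.span ℂ resolvents : Set C₀(ℝ, ℂ)) := by
  have hI : Complex.I.im ≠ 0 := by simp
  have hmem : resolvent Complex.I hI ∈ resolventAlgebra :=
    Submodule.le_topologicalClosure _ (Submodule.subset_span (resolvent_mem_resolvents hI))
  have htop := nonUnitalStarSubalgebra_eq_top_of_separatesPoints resolventAlgebra
    isClosed_closure (fun x y hxy => ⟨_, hmem, (resolvent_injective hI).ne hxy⟩)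
    (fun x => ⟨_, hmem, resolvent_apply_ne_zero hI x⟩)
  rw [dense_iff_closure_eq]
  exact congrArg SetLike.coe htop

end Resolvent

end ZeroAtInftyContinuousMap

theorem stmt13 :
    Dense (↑(Submodule.span ℂ
      {g : C₀(ℝ, ℂ) | ∃ ω : ℂ, ω.im ≠ 0 ∧ ∀ x : ℝ, g x = ((x : ℂ) - ω)⁻¹}) :
        Set C₀(ℝ, ℂ)) :=
  ZeroAtInftyContinuousMap.dense_span_resolvents
end

section
/- There exist real sequences (a_k) and (b_k) with b_k < 0 for all k, b_k → −∞, Σ_k |a_k| |b_k|^n < ∞ for every non-negative integer n, and Σ_k a_k (b_k)^n = 1 for every non-negative integer n. -/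
/-!
Take the nodes `b k = -2 ^ k`. Interpolating `x ^ n` at `b 0, …, b (N - 1)` and evaluating at
`x = 1` gives weights `w N k = ∏_{j < N, j ≠ k} (1 - b j) / (b k - b j)` with
`∑_{k < N} w N k * b k ^ n = 1` whenever `n < N`. The factors with `j > k` are
`1 + O(2 ^ (k - j))`, so their partial products increase and stay below `e ^ 4`; hence
`w N k` converges as `N → ∞` to the infinite product `a k`. The factors with `j < k` are at most
`2 ^ (j + 2 - k)`, so `|w N k| ≤ e ^ 4 D k` with `D k ≈ 2 ^ (-k ^ 2 / 2)`, which beats every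
`|b k| ^ n = 2 ^ (k n)`. Dominated convergence carries the identity over to the limit.
-/

open Filter Finset Polynomial Topology

theorem Lagrange.sum_eval_basis_mul_pow {F ι : Type*} [Field F] [DecidableEq ι] {s : Finset ι}
    {v : ι → F} (hvs : Set.InjOn v s) {n : ℕ} (hn : n < #s) (x : F) :
    ∑ i ∈ s, (Lagrange.basis s v i).eval x * v i ^ n = x ^ n := by
  have hdeg : (X ^ n : F[X]).degree < #s := by
    rw [degree_X_pow]; exact_mod_cast hn
  have := congrArg (eval x) (Lagrange.eq_interpolate hvs hdeg)
  simpa [Lagrange.interpolate_apply, eval_finsetSum, mul_comm] using this.symm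

theorem tsum_eq_of_tendsto_sum_range {G : Type*} [NormedAddCommGroup G] [CompleteSpace G]
    {f : ℕ → ℕ → G} {g : ℕ → G} {bound : ℕ → ℝ} {L : G} (h_sum : Summable bound)
    (h_bound : ∀ N k, k < N → ‖f N k‖ ≤ bound k)
    (h_lim : ∀ k, Tendsto (f · k) atTop (𝓝 (g k)))
    (h_partial : Tendsto (fun N => ∑ k ∈ range N, f N k) atTop (𝓝 L)) : ∑' k, g k = L := by
  set F : ℕ → ℕ → G := fun N k => if k < N then f N k else 0
  have hF_lim (k : ℕ) : Tendsto (F · k) atTop (𝓝 (g k)) :=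
    (h_lim k).congr' <| by filter_upwards [eventually_gt_atTop k] with N hN; simp [F, hN]
  have hF_bound (N k : ℕ) : ‖F N k‖ ≤ bound k := by
    by_cases h : k < N
    · simpa [F, h] using h_bound N k h
    · simpa [F, h] using (norm_nonneg _).trans (h_bound (k + 1) k k.lt_succ_self)
  refine tendsto_nhds_unique (tendsto_tsum_of_dominated_convergence h_sum hF_lim
    (.of_forall hF_bound)) (h_partial.congr fun N => ?_)
  rw [tsum_eq_sum (s := range N) fun k hk => by simp_all [F]]
  exact sum_congr rfl fun k hk => by simp_all [F]

noncomputable section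

namespace Seeley

open Real

def node (k : ℕ) : ℝ := -2 ^ k

lemma node_neg (k : ℕ) : node k < 0 := by
  simp only [node, Left.neg_neg_iff]; positivity

lemma abs_node (k : ℕ) : |node k| = 2 ^ k := by
  rw [node, abs_neg, abs_of_pos (by positivity)]

lemma node_injective : Function.Injective node := fun i j h => by
  simpa [node] using h

lemma tendsto_node_atBot : Tendsto node atTop atBot :=
  tendsto_neg_atTop_atBot.comp (tendsto_pow_atTop_atTop_of_one_lt one_lt_two)

-- `(1 - node j) / (node k - node j)`, the value at `1` of a Lagrange basis divisor
def factor (k j : ℕ) : ℝ := if j = k then 1 else (1 + 2 ^ j) / (2 ^ j - 2 ^ k)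

def weight (N k : ℕ) : ℝ := ∏ j ∈ range N, factor k j

lemma eval_basis_node_one (N k : ℕ) :
    (Lagrange.basis (range N) node k).eval 1 = weight N k := by
  rw [Lagrange.basis, eval_prod, weight, ← prod_erase _ (show factor k k = 1 by simp [factor])]
  refine prod_congr rfl fun j hj => ?_
  rw [Lagrange.basisDivisor, eval_mul, eval_C, eval_sub, eval_X, eval_C, factor,
    if_neg (ne_of_mem_erase hj), node, node, div_eq_inv_mul]
  ring_nf

lemma sum_weight_mul_node_pow {n N : ℕ} (hn : n < N) :
    ∑ k ∈ range N, weight N k * node k ^ n = 1 := by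
  rw [← one_pow n, ← Lagrange.sum_eval_basis_mul_pow node_injective.injOn (s := range N)
    (by simpa using hn)]
  exact sum_congr rfl fun k _ => by rw [eval_basis_node_one]

lemma abs_factor_le_of_lt {k j : ℕ} (h : j < k) : |factor k j| ≤ 2 ^ (j + 2) / 2 ^ k := by
  have hjk : (2 : ℝ) ^ j * 2 ≤ 2 ^ k := by
    simpa [pow_succ] using pow_le_pow_right₀ one_le_two h
  have hj : (1 : ℝ) ≤ 2 ^ j := one_le_pow₀ one_le_two
  rw [factor, if_neg h.ne, abs_div, abs_of_pos (by positivity), abs_of_neg (by linarith),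
    div_le_div_iff₀ (by linarith) (by positivity), pow_add]
  nlinarith

lemma one_le_factor_of_lt {k j : ℕ} (h : k < j) : 1 ≤ factor k j := by
  have hkj : (2 : ℝ) ^ k < 2 ^ j := pow_lt_pow_right₀ one_lt_two h
  rw [factor, if_neg h.ne', one_le_div (by linarith)]
  linarith [pow_pos (two_pos (α := ℝ)) k]

lemma factor_succ_add_le (k i : ℕ) : factor k (k + 1 + i) ≤ 1 + 2 * (1 / 2) ^ i := by
  have hk : (1 : ℝ) ≤ 2 ^ k := one_le_pow₀ one_le_two
  have hi : (1 : ℝ) ≤ 2 ^ i := one_le_pow₀ one_le_two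
  rw [factor, if_neg (by omega), div_le_iff₀ (by rw [pow_add, pow_succ]; nlinarith),
    one_div_pow, pow_add, pow_succ]
  field_simp
  nlinarith

def head (k : ℕ) : ℝ := ∏ j ∈ range k, factor k j

def tail (k m : ℕ) : ℝ := ∏ i ∈ range m, factor k (k + 1 + i)

lemma weight_eq_head_mul_tail (k m : ℕ) : weight (m + (k + 1)) k = head k * tail k m := by
  rw [weight, add_comm, prod_range_add, prod_range_succ, head, tail, factor, if_pos rfl,
    mul_one]

lemma one_le_tail (k m : ℕ) : 1 ≤ tail k m :=
  one_le_prod fun i _ => one_le_factor_of_lt (by omega)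

lemma tail_mono (k : ℕ) : Monotone (tail k) :=
  monotone_nat_of_le_succ fun m => by
    rw [tail, tail, prod_range_succ]
    exact le_mul_of_one_le_right (zero_le_one.trans (one_le_tail k m))
      (one_le_factor_of_lt (by omega))

lemma tail_le_exp_four (k m : ℕ) : tail k m ≤ exp 4 :=
  calc tail k m ≤ ∏ i ∈ range m, (1 + 2 * (1 / 2 : ℝ) ^ i) :=
        prod_le_prod (fun i _ => zero_le_one.trans (one_le_factor_of_lt (by omega)))
          fun i _ => factor_succ_add_le k i
    _ ≤ exp (∑ i ∈ range m, 2 * (1 / 2 : ℝ) ^ i) :=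
        prod_one_add_le_exp_sum _ fun i => by positivity
    _ ≤ exp 4 := by
        rw [exp_le_exp, ← mul_sum]
        linarith [sum_geometric_two_le m]

-- The infinite product `∏_{j ≠ k} factor k j`, written with `⨆` because the partial
-- products of its tail increase.
def coeff (k : ℕ) : ℝ := head k * ⨆ m, tail k m

lemma tendsto_weight (k : ℕ) : Tendsto (weight · k) atTop (𝓝 (coeff k)) := by
  rw [← tendsto_add_atTop_iff_nat (k + 1)]
  simp only [weight_eq_head_mul_tail]
  have h_bdd : BddAbove (Set.range (tail k)) :=
    ⟨exp 4, by rintro _ ⟨m, rfl⟩; exact tail_le_exp_four k m⟩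
  exact (tendsto_atTop_ciSup (tail_mono k) h_bdd).const_mul _

def headBound (k : ℕ) : ℝ := ∏ j ∈ range k, (2 : ℝ) ^ (j + 2) / 2 ^ k

lemma abs_head_le (k : ℕ) : |head k| ≤ headBound k := by
  rw [head, abs_prod]
  exact prod_le_prod (fun _ _ => abs_nonneg _) fun j hj => abs_factor_le_of_lt (mem_range.mp hj)

lemma abs_weight_le {N k : ℕ} (h : k < N) : |weight N k| ≤ exp 4 * headBound k := by
  obtain ⟨m, rfl⟩ : ∃ m, N = m + (k + 1) := ⟨N - (k + 1), by omega⟩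
  rw [weight_eq_head_mul_tail, abs_mul, abs_of_pos (zero_lt_one.trans_le (one_le_tail k m)),
    mul_comm (exp 4)]
  exact mul_le_mul (abs_head_le k) (tail_le_exp_four k m) (zero_le_one.trans (one_le_tail k m))
    ((abs_nonneg _).trans (abs_head_le k))

lemma abs_coeff_le (k : ℕ) : |coeff k| ≤ exp 4 * headBound k :=
  le_of_tendsto (tendsto_weight k).abs <|
    (eventually_gt_atTop k).mono fun _ hN => abs_weight_le hN

lemma headBound_succ (k : ℕ) : headBound (k + 1) = 2 * headBound k / 2 ^ k := by
  simp only [headBound, prod_range_succ, prod_div_distrib, prod_const, card_range]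
  field_simp
  ring

lemma summable_headBound_mul_pow (n : ℕ) : Summable fun k => headBound k * (2 ^ k) ^ n := by
  have hpos (k : ℕ) : 0 < headBound k := prod_pos fun _ _ => by positivity
  refine summable_of_ratio_test_tendsto_lt_one zero_lt_one
    (.of_forall fun k => (mul_pos (hpos k) (by positivity)).ne') ?_
  have hratio (k : ℕ) :
      ‖headBound (k + 1) * (2 ^ (k + 1)) ^ n‖ / ‖headBound k * (2 ^ k) ^ n‖
        = 2 ^ (n + 1) / 2 ^ k := by
    have := hpos k
    have := hpos (k + 1)
    rw [norm_of_nonneg (by positivity), norm_of_nonneg (by positivity), headBound_succ]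
    field_simp
    ring
  exact (tendsto_const_nhds.div_atTop (tendsto_pow_atTop_atTop_of_one_lt one_lt_two)).congr
    fun k => (hratio k).symm

end Seeley

end

open Seeley

theorem stmt14 :
    ∃ a b : ℕ → ℝ,
      (∀ k, b k < 0) ∧
      Tendsto b atTop atBot ∧
      (∀ n : ℕ, Summable (fun k => |a k| * |b k| ^ n)) ∧
      (∀ n : ℕ, ∑' k, a k * (b k) ^ n = 1) := by
  have h_sum (n : ℕ) := (summable_headBound_mul_pow n).mul_left (Real.exp 4)
  refine ⟨coeff, node, node_neg, tendsto_node_atBot, fun n => ?_, fun n => ?_⟩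
  · refine (h_sum n).of_nonneg_of_le (fun k => by positivity) fun k => ?_
    rw [abs_node, ← mul_assoc]
    gcongr
    exact abs_coeff_le k
  · refine tsum_eq_of_tendsto_sum_range (h_sum n) (fun N k hk => ?_)
      (fun k => (tendsto_weight k).mul_const _)
      (tendsto_const_nhds.congr' <| (eventually_gt_atTop n).mono fun N hN =>
        (sum_weight_mul_node_pow hN).symm)
    rw [norm_mul, norm_pow, Real.norm_eq_abs, Real.norm_eq_abs, abs_node, ← mul_assoc]
    gcongr
    exact abs_weight_le hk
end

section
/- Let φ ∈ 𝒜 (i.e. φ is smooth on ℝ with |φ^(n)(x)| ≤ c_n ⟨x⟩^(β−n) for some β < 0). Then the multiplication operator S_φ f := φ·f on 𝒜⁺ is bounded with respect to each norm ‖·‖_{𝒜⁺_n}: there is a constant C(n,φ) with ‖φ f‖_{𝒜⁺_n} ≤ C(n,φ) ‖f‖_{𝒜⁺_n} for all f ∈ 𝒜⁺. -/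
open Real Set MeasureTheory

noncomputable section

def SβP (β : ℝ) : Set (ℝ → ℂ) :=
  {f | ContDiffOn ℝ (⊤ : ℕ∞) f (Ici 0) ∧ ∀ n : ℕ, ∃ c : ℝ, 0 < c ∧ ∀ x : ℝ, 0 ≤ x →
    ‖iteratedDerivWithin n f (Ici 0) x‖ ≤ c * (1 + x ^ 2) ^ ((β - n) / 2)}

def AcalP : Set (ℝ → ℂ) := ⋃ β ∈ Iio (0 : ℝ), SβP β

def normAP (n : ℕ) (f : ℝ → ℂ) : ℝ :=
  ∑ r ∈ Finset.range (n + 1),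
    ∫ x in Ioi (0 : ℝ),
      ‖iteratedDerivWithin r f (Ici 0) x‖ * (1 + x ^ 2) ^ (((r : ℝ) - 1) / 2)

lemma weight_integrable {s : ℝ} (hs : s < -(1/2)) :
    IntegrableOn (fun x : ℝ => (1 + x ^ 2) ^ s) (Ioi 0) := by
  have h2 : Integrable (fun x : ℝ => ((1:ℝ) + ‖x‖ ^ 2) ^ (-(-2*s) / 2)) (volume : Measure ℝ) := by
    apply integrable_rpow_neg_one_add_norm_sq
    simp only [Module.finrank_self, Nat.cast_one]
    linarith
  have he : -(-2*s) / 2 = s := by ring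
  simp only [Real.norm_eq_abs, sq_abs, he] at h2
  exact h2.integrableOn

theorem stmt16 (φ : ℝ → ℂ) (hφ : φ ∈ Acal) (n : ℕ) :
    ∃ C : ℝ, 0 < C ∧ ∀ f ∈ AcalP, normAP n (φ * f) ≤ C * normAP n f := by
  simp only [Acal, mem_iUnion, mem_Iio, exists_prop] at hφ
  obtain ⟨β, hβ, hφs, hφb⟩ := hφ
  choose c hc0 hcb using hφb
  set K : ℕ → ℕ → ℝ := fun r i => (r.choose i : ℝ) * c i with hK
  set C : ℝ := ∑ r ∈ Finset.range (n + 1), ∑ i ∈ Finset.range (r + 1), K r i with hCdef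
  have hK0 : ∀ r i, 0 ≤ K r i := fun r i => mul_nonneg (Nat.cast_nonneg _) (hc0 i).le
  have hC0 : 0 ≤ C :=
    Finset.sum_nonneg fun r _ => Finset.sum_nonneg fun i _ => hK0 r i
  refine ⟨C + 1, by linarith, ?_⟩
  intro f hf
  simp only [AcalP, mem_iUnion, mem_Iio, exists_prop] at hf
  obtain ⟨γ, hγ, hfs, hfb⟩ := hf
  choose d hd0 hdb using hfb
  -- the terms of normAP for f
  set h : ℕ → ℝ → ℝ := fun j x =>
    ‖iteratedDerivWithin j f (Ici 0) x‖ * (1 + x ^ 2) ^ (((j : ℝ) - 1) / 2) with hh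
  have hpos : ∀ x : ℝ, (0:ℝ) < 1 + x ^ 2 := fun x => by positivity
  have hmeas : ∀ j : ℕ, AEStronglyMeasurable (h j) (volume.restrict (Ioi 0)) := by
    intro j
    have c1 : ContinuousOn (fun x : ℝ => ‖iteratedDerivWithin j f (Ici 0) x‖) (Ioi 0) :=
      ((hfs.continuousOn_iteratedDerivWithin (by exact_mod_cast le_top) (uniqueDiffOn_Ici 0)).mono
        Ioi_subset_Ici_self).norm
    have c2 : Continuous fun x : ℝ => (1 + x ^ 2) ^ (((j : ℝ) - 1) / 2) :=
      Continuous.rpow_const (by continuity) fun x => Or.inl (hpos x).ne'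
    exact ((c1.mul c2.continuousOn).aestronglyMeasurable measurableSet_Ioi)
  have hint : ∀ j : ℕ, IntegrableOn (h j) (Ioi 0) := by
    intro j
    have hw : IntegrableOn (fun x : ℝ => (1 + x ^ 2) ^ ((γ - 1) / 2)) (Ioi 0) :=
      weight_integrable (by linarith)
    refine (hw.const_mul (d j)).mono' (hmeas j) ?_
    filter_upwards [ae_restrict_mem measurableSet_Ioi] with x hx
    have hx0 : (0:ℝ) ≤ x := le_of_lt hx
    have hb1 : h j x ≤ d j * (1 + x ^ 2) ^ ((γ - 1) / 2) := by
      have e1 : (1 + x ^ 2) ^ ((γ - (j:ℝ)) / 2) * (1 + x ^ 2) ^ (((j : ℝ) - 1) / 2)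
          = (1 + x ^ 2) ^ ((γ - 1) / 2) := by
        rw [← rpow_add (hpos x)]; ring_nf
      calc h j x ≤ (d j * (1 + x ^ 2) ^ ((γ - (j:ℝ)) / 2)) * (1 + x ^ 2) ^ (((j : ℝ) - 1) / 2) :=
            mul_le_mul_of_nonneg_right (hdb j x hx0) (rpow_nonneg (hpos x).le _)
        _ = d j * (1 + x ^ 2) ^ ((γ - 1) / 2) := by rw [mul_assoc, e1]
    have : ‖h j x‖ = h j x := by
      rw [Real.norm_eq_abs, abs_of_nonneg]
      exact mul_nonneg (norm_nonneg _) (rpow_nonneg (hpos x).le _)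
    rw [this]; exact hb1
  have hterm_nonneg : ∀ j : ℕ, 0 ≤ ∫ x in Ioi (0:ℝ), h j x := by
    intro j
    refine setIntegral_nonneg measurableSet_Ioi fun x _ =>
      mul_nonneg (norm_nonneg _) (rpow_nonneg (hpos x).le _)
  have hnf : normAP n f = ∑ r ∈ Finset.range (n + 1), ∫ x in Ioi (0:ℝ), h r x := rfl
  have hnf0 : 0 ≤ normAP n f := by
    rw [hnf]; exact Finset.sum_nonneg fun r _ => hterm_nonneg r
  have hsingle : ∀ j ≤ n, (∫ x in Ioi (0:ℝ), h j x) ≤ normAP n f := by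
    intro j hj
    rw [hnf]
    exact Finset.single_le_sum (fun r _ => hterm_nonneg r)
      (Finset.mem_range.2 (Nat.lt_succ_of_le hj))
  -- smoothness of the product
  have hFs : ContDiffOn ℝ (⊤ : ℕ∞) (φ * f) (Ici 0) := (hφs.contDiffOn).mul hfs
  -- pointwise Leibniz bound
  have hgle : ∀ r ≤ n, ∀ x ∈ Ioi (0:ℝ),
      ‖iteratedDerivWithin r (φ * f) (Ici 0) x‖ * (1 + x ^ 2) ^ (((r : ℝ) - 1) / 2) ≤
        ∑ i ∈ Finset.range (r + 1), K r i * h (r - i) x := by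
    intro r _ x hx
    have hxm : x ∈ Ici (0:ℝ) := mem_Ici.mpr (le_of_lt hx)
    have eφ : ∀ i : ℕ, iteratedFDerivWithin ℝ i φ (Ici 0) x = iteratedFDeriv ℝ i φ x := by
      intro i
      have h1 : Ici (0:ℝ) ∩ Ioi 0 = Ioi 0 := inter_eq_right.mpr Ioi_subset_Ici_self
      rw [← iteratedFDerivWithin_inter_open (s := Ici (0:ℝ)) isOpen_Ioi hx, h1]
      exact iteratedFDerivWithin_of_isOpen i isOpen_Ioi hx
    have hlb : ‖iteratedDerivWithin r (φ * f) (Ici 0) x‖ ≤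
        ∑ i ∈ Finset.range (r + 1), (r.choose i : ℝ) * ‖iteratedDeriv i φ x‖ *
          ‖iteratedDerivWithin (r - i) f (Ici 0) x‖ := by
      have h0 := norm_iteratedFDerivWithin_mul_le (𝕜 := ℝ)
        (hφs.contDiffOn (s := Ici 0)) hfs (uniqueDiffOn_Ici 0) hxm (n := r) (by exact_mod_cast le_top)
      calc ‖iteratedDerivWithin r (φ * f) (Ici 0) x‖
          = ‖iteratedFDerivWithin ℝ r (fun y => φ y * f y) (Ici 0) x‖ :=
            (norm_iteratedFDerivWithin_eq_norm_iteratedDerivWithin).symm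
        _ ≤ ∑ i ∈ Finset.range (r + 1), (r.choose i : ℝ) *
              ‖iteratedFDerivWithin ℝ i φ (Ici 0) x‖ *
              ‖iteratedFDerivWithin ℝ (r - i) f (Ici 0) x‖ := h0
        _ = _ := by
            refine Finset.sum_congr rfl fun i _ => ?_
            rw [eφ i, norm_iteratedFDeriv_eq_norm_iteratedDeriv,
              norm_iteratedFDerivWithin_eq_norm_iteratedDerivWithin]
    have hw0 : (0:ℝ) ≤ (1 + x ^ 2) ^ (((r : ℝ) - 1) / 2) := rpow_nonneg (hpos x).le _
    calc ‖iteratedDerivWithin r (φ * f) (Ici 0) x‖ * (1 + x ^ 2) ^ (((r : ℝ) - 1) / 2)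
        ≤ (∑ i ∈ Finset.range (r + 1), (r.choose i : ℝ) * ‖iteratedDeriv i φ x‖ *
            ‖iteratedDerivWithin (r - i) f (Ici 0) x‖) * (1 + x ^ 2) ^ (((r : ℝ) - 1) / 2) :=
          mul_le_mul_of_nonneg_right hlb hw0
      _ = ∑ i ∈ Finset.range (r + 1), (r.choose i : ℝ) * ‖iteratedDeriv i φ x‖ *
            ‖iteratedDerivWithin (r - i) f (Ici 0) x‖ * (1 + x ^ 2) ^ (((r : ℝ) - 1) / 2) :=
          Finset.sum_mul _ _ _
      _ ≤ ∑ i ∈ Finset.range (r + 1), K r i * h (r - i) x := by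
          refine Finset.sum_le_sum fun i hi => ?_
          have hir : i ≤ r := Nat.lt_succ_iff.mp (Finset.mem_range.mp hi)
          have hcast : ((r - i : ℕ) : ℝ) = (r : ℝ) - (i : ℝ) := by
            exact Nat.cast_sub hir
          have hwle : (1 + x ^ 2) ^ ((β - (i:ℝ)) / 2) * (1 + x ^ 2) ^ (((r : ℝ) - 1) / 2)
              ≤ (1 + x ^ 2) ^ ((((r - i : ℕ) : ℝ) - 1) / 2) := by
            rw [← rpow_add (hpos x)]
            apply rpow_le_rpow_of_exponent_le (by nlinarith [sq_nonneg x])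
            rw [hcast]; linarith
          calc (r.choose i : ℝ) * ‖iteratedDeriv i φ x‖ *
                ‖iteratedDerivWithin (r - i) f (Ici 0) x‖ * (1 + x ^ 2) ^ (((r : ℝ) - 1) / 2)
              ≤ (r.choose i : ℝ) * (c i * (1 + x ^ 2) ^ ((β - (i:ℝ)) / 2)) *
                ‖iteratedDerivWithin (r - i) f (Ici 0) x‖ *
                (1 + x ^ 2) ^ (((r : ℝ) - 1) / 2) := by
                have := hcb i x
                gcongr
            _ = (K r i * ‖iteratedDerivWithin (r - i) f (Ici 0) x‖) *
                ((1 + x ^ 2) ^ ((β - (i:ℝ)) / 2) * (1 + x ^ 2) ^ (((r : ℝ) - 1) / 2)) := by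
                rw [hK]; ring
            _ ≤ (K r i * ‖iteratedDerivWithin (r - i) f (Ici 0) x‖) *
                (1 + x ^ 2) ^ ((((r - i : ℕ) : ℝ) - 1) / 2) := by
                refine mul_le_mul_of_nonneg_left hwle ?_
                exact mul_nonneg (hK0 r i) (norm_nonneg _)
            _ = K r i * h (r - i) x := by rw [hh]; ring
  -- integral bound for each r
  have hIr : ∀ r ≤ n,
      (∫ x in Ioi (0:ℝ), ‖iteratedDerivWithin r (φ * f) (Ici 0) x‖ *
        (1 + x ^ 2) ^ (((r : ℝ) - 1) / 2)) ≤
      (∑ i ∈ Finset.range (r + 1), K r i) * normAP n f := by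
    intro r hr
    set g : ℝ → ℝ := fun x => ‖iteratedDerivWithin r (φ * f) (Ici 0) x‖ *
      (1 + x ^ 2) ^ (((r : ℝ) - 1) / 2) with hg
    set G : ℝ → ℝ := fun x => ∑ i ∈ Finset.range (r + 1), K r i * h (r - i) x with hG
    have hGint : IntegrableOn G (Ioi 0) :=
      integrable_finset_sum _ fun i _ => (hint (r - i)).const_mul (K r i)
    have hgmeas : AEStronglyMeasurable g (volume.restrict (Ioi 0)) := by
      have c1 : ContinuousOn (fun x : ℝ => ‖iteratedDerivWithin r (φ * f) (Ici 0) x‖) (Ioi 0) :=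
        ((hFs.continuousOn_iteratedDerivWithin (by exact_mod_cast le_top) (uniqueDiffOn_Ici 0)).mono
          Ioi_subset_Ici_self).norm
      have c2 : Continuous fun x : ℝ => (1 + x ^ 2) ^ (((r : ℝ) - 1) / 2) :=
        Continuous.rpow_const (by continuity) fun x => Or.inl (hpos x).ne'
      exact (c1.mul c2.continuousOn).aestronglyMeasurable measurableSet_Ioi
    have hgint : IntegrableOn g (Ioi 0) := by
      refine hGint.mono' hgmeas ?_
      filter_upwards [ae_restrict_mem measurableSet_Ioi] with x hx
      have : ‖g x‖ = g x := by
        rw [Real.norm_eq_abs, abs_of_nonneg]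
        exact mul_nonneg (norm_nonneg _) (rpow_nonneg (hpos x).le _)
      rw [this]; exact hgle r hr x hx
    calc (∫ x in Ioi (0:ℝ), g x) ≤ ∫ x in Ioi (0:ℝ), G x :=
          setIntegral_mono_on hgint hGint measurableSet_Ioi (hgle r hr)
      _ = ∑ i ∈ Finset.range (r + 1), ∫ x in Ioi (0:ℝ), K r i * h (r - i) x :=
          integral_finset_sum _ fun i _ => (hint (r - i)).const_mul (K r i)
      _ = ∑ i ∈ Finset.range (r + 1), K r i * ∫ x in Ioi (0:ℝ), h (r - i) x := by
          refine Finset.sum_congr rfl fun i _ => ?_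
          exact integral_const_mul _ _
      _ ≤ ∑ i ∈ Finset.range (r + 1), K r i * normAP n f := by
          refine Finset.sum_le_sum fun i _ => ?_
          exact mul_le_mul_of_nonneg_left (hsingle (r - i) (le_trans (Nat.sub_le r i) hr))
            (hK0 r i)
      _ = (∑ i ∈ Finset.range (r + 1), K r i) * normAP n f := (Finset.sum_mul _ _ _).symm
  calc normAP n (φ * f)
      = ∑ r ∈ Finset.range (n + 1), ∫ x in Ioi (0:ℝ),
          ‖iteratedDerivWithin r (φ * f) (Ici 0) x‖ * (1 + x ^ 2) ^ (((r : ℝ) - 1) / 2) := rfl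
    _ ≤ ∑ r ∈ Finset.range (n + 1), (∑ i ∈ Finset.range (r + 1), K r i) * normAP n f := by
        refine Finset.sum_le_sum fun r hr => ?_
        exact hIr r (Nat.lt_succ_iff.mp (Finset.mem_range.mp hr))
    _ = C * normAP n f := by rw [hCdef, Finset.sum_mul]
    _ ≤ (C + 1) * normAP n f := by nlinarith
end
end
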